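/- arXiv:math/0409044 — 10 statements merged into one kernel-verified Lean document; each statement's English description precedes it below -/
import Mathlib

section
/- Let Φ be a root system in a finite-dimensional real inner product space E, with Weyl group W, coroot lattice Q∨ and coweight lattice P∨. Then: (a) an element x ∈ P∨ has minimal norm in its coset x + Q∨ (i.e. ‖x‖ ≤ ‖x + q‖ for all q ∈ Q∨) if and only if ⟪x, α⟫ ∈ {−1, 0, 1} for every α ∈ Φ; (b) if x, y ∈ P∨ lie in the same coset of Q∨ and both have minimal norm in that coset, then y = w x for some w ∈ W. In particular, each coset of Q∨ in P∨ contains exactly one W-orbit of elements of minimal norm. -/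
open scoped RealInnerProductSpace

/-- A root system in a real inner product space `E`. -/
def IsRootSystem {E : Type*} [NormedAddCommGroup E] [InnerProductSpace ℝ E]
    (Φ : Set E) : Prop :=
  Φ.Finite ∧ (0 : E) ∉ Φ ∧
    (∀ α ∈ Φ, ∀ β ∈ Φ, ∃ n : ℤ, 2 * ⟪β, α⟫ / ⟪α, α⟫ = (n : ℝ)) ∧
    (∀ α ∈ Φ, ∀ β ∈ Φ, β - (2 * ⟪β, α⟫ / ⟪α, α⟫) • α ∈ Φ)

/-- The Weyl group of `Φ`: the subgroup of linear automorphisms of `E` generated by the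
reflections in the roots. -/
def WeylGroup {E : Type*} [NormedAddCommGroup E] [InnerProductSpace ℝ E]
    (Φ : Set E) : Subgroup (E ≃ₗ[ℝ] E) :=
  Subgroup.closure
    {w : E ≃ₗ[ℝ] E | ∃ α ∈ Φ, ∀ v : E, w v = v - (2 * ⟪v, α⟫ / ⟪α, α⟫) • α}

/-- The coroot lattice of `Φ`: the additive subgroup generated by the coroots `2α/⟪α,α⟫`. -/
def corootLattice {E : Type*} [NormedAddCommGroup E] [InnerProductSpace ℝ E]
    (Φ : Set E) : AddSubgroup E :=
  AddSubgroup.closure {x : E | ∃ α ∈ Φ, x = (2 / ⟪α, α⟫) • α}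

/-- The coweight lattice of `Φ`: the vectors pairing integrally with all roots. -/
def coweightLattice {E : Type*} [NormedAddCommGroup E] [InnerProductSpace ℝ E]
    (Φ : Set E) : Set E :=
  {x : E | ∀ α ∈ Φ, ∃ n : ℤ, ⟪x, α⟫ = (n : ℝ)}


/-!
If `x` is minimal in `x + Q∨`, comparing `‖x‖` with `‖x ± α∨‖` forces `⟪x, α⟫ ∈ {-1, 0, 1}`.
Conversely, let `x` be minuscule and `q = ∑ αᵢ∨`; induct on the number of summands. If
`⟪x, αᵢ⟫ = -1`, then `x + q = s_{αᵢ} x + (q - αᵢ∨)` with `s_{αᵢ} x` minuscule of the same norm;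
if `⟪x + q, αᵢ⟫ ≥ 1`, then dropping `αᵢ∨` does not increase the norm; otherwise integrality gives
`⟪αᵢ∨, q⟫ ≤ 0` for all `i`, so `‖q‖² = ∑ ⟪αᵢ∨, q⟫ ≤ 0`.

For (b), as long as some root has `⟪y, α⟫ = 1` and `⟪x, α⟫ = -1`, replacing `y` by
`s_α y = y - α∨` lowers `‖y - x‖²` by `‖α∨‖²`, which is bounded below on the finite set `Φ`.
When no such root is left, `y - x` is a minuscule element of `Q∨`, hence minimal in `Q∨`,
hence `0`.
-/

section

variable {E : Type*} [NormedAddCommGroup E] [InnerProductSpace ℝ E]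

theorem Multiset.sum_eq_zero_of_forall_inner_sum_nonpos {s : Multiset E}
    (h : ∀ a ∈ s, ⟪a, s.sum⟫ ≤ 0) : s.sum = 0 := by
  have hsum : ⟪s.sum, s.sum⟫ = (s.map (⟪·, s.sum⟫)).sum := by
    simpa [real_inner_comm] using map_multiset_sum (innerₛₗ ℝ s.sum) s
  have hle : (s.map (⟪·, s.sum⟫)).sum ≤ 0 := by
    simpa using Multiset.sum_map_le_sum_map _ (fun _ => (0 : ℝ)) h
  exact real_inner_self_nonpos.1 (hsum ▸ hle)

theorem Set.Finite.exists_pos_le_of_pos {α : Type*} {s : Set α} (hs : s.Finite) {f : α → ℝ}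
    (hf : ∀ a ∈ s, 0 < f a) : ∃ δ > 0, ∀ a ∈ s, δ ≤ f a := by
  rcases s.eq_empty_or_nonempty with rfl | hne
  · exact ⟨1, one_pos, by simp⟩
  obtain ⟨a, ha, hmin⟩ := Set.exists_min_image s f hs hne
  exact ⟨f a, hf a ha, hmin⟩

noncomputable def coroot (α : E) : E := (2 / ⟪α, α⟫) • α

theorem coroot_neg (α : E) : coroot (-α) = -coroot α := by
  simp [coroot]

theorem coroot_ne_zero {α : E} (hα : α ≠ 0) : coroot α ≠ 0 :=
  smul_ne_zero (by simpa using hα) hα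

theorem two_mul_inner_coroot (v α : E) : 2 * ⟪v, coroot α⟫ = ⟪v, α⟫ * ‖coroot α‖ ^ 2 := by
  rcases eq_or_ne α 0 with rfl | hα
  · simp [coroot]
  have hα' : ⟪α, α⟫ ≠ 0 := by simpa using hα
  rw [← real_inner_self_eq_norm_sq]
  simp only [coroot, real_inner_smul_left, real_inner_smul_right]
  field_simp

theorem norm_add_coroot_sq (v α : E) :
    ‖v + coroot α‖ ^ 2 = ‖v‖ ^ 2 + (⟪v, α⟫ + 1) * ‖coroot α‖ ^ 2 := by
  rw [norm_add_sq_real, two_mul_inner_coroot]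
  ring

theorem norm_sub_coroot_sq (v α : E) :
    ‖v - coroot α‖ ^ 2 = ‖v‖ ^ 2 - (⟪v, α⟫ - 1) * ‖coroot α‖ ^ 2 := by
  rw [norm_sub_sq_real, two_mul_inner_coroot]
  ring

theorem inner_sub_smul_root_self {α : E} (hα : α ≠ 0) (v : E) :
    ⟪v - (2 * ⟪v, α⟫ / ⟪α, α⟫) • α, α⟫ = -⟪v, α⟫ := by
  have hα' : ⟪α, α⟫ ≠ 0 := by simpa using hα
  rw [inner_sub_left, real_inner_smul_left]
  field_simp
  ring

theorem involutive_sub_smul_root (α : E) :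
    Function.Involutive fun v : E => v - (2 * ⟪v, α⟫ / ⟪α, α⟫) • α := fun v => by
  rcases eq_or_ne α 0 with rfl | hα
  · simp
  simp only [inner_sub_smul_root_self hα]
  match_scalars <;> ring

/-- For `α = 0` the formula is the identity, since `2 * ⟪v, 0⟫ / ⟪0, 0⟫ = 0`. -/
noncomputable def rootReflection (α : E) : E ≃ₗ[ℝ] E :=
  LinearEquiv.ofInvolutive
    { toFun := fun v => v - (2 * ⟪v, α⟫ / ⟪α, α⟫) • α
      map_add' := fun v w => by
        simp only [inner_add_left]
        match_scalars <;> ring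
      map_smul' := fun r v => by
        simp only [real_inner_smul_left, RingHom.id_apply]
        match_scalars <;> ring }
    (involutive_sub_smul_root α)

theorem rootReflection_apply (α v : E) :
    rootReflection α v = v - (2 * ⟪v, α⟫ / ⟪α, α⟫) • α :=
  rfl

theorem rootReflection_rootReflection (α v : E) : rootReflection α (rootReflection α v) = v :=
  involutive_sub_smul_root α v

theorem inner_rootReflection_left (α v w : E) :
    ⟪rootReflection α v, w⟫ = ⟪v, rootReflection α w⟫ := by
  simp only [rootReflection_apply, inner_sub_left, inner_sub_right, real_inner_smul_left,
    real_inner_smul_right, real_inner_comm α w, real_inner_comm α v]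
  ring

theorem norm_rootReflection (α v : E) : ‖rootReflection α v‖ = ‖v‖ := by
  rw [norm_eq_sqrt_real_inner, inner_rootReflection_left, rootReflection_rootReflection,
    ← norm_eq_sqrt_real_inner]

theorem rootReflection_apply_eq_sub_smul_coroot (α v : E) :
    rootReflection α v = v - ⟪v, α⟫ • coroot α := by
  rw [rootReflection_apply, coroot, smul_smul]
  ring_nf

def IsMinuscule (Φ : Set E) (x : E) : Prop :=
  ∀ α ∈ Φ, ⟪x, α⟫ = -1 ∨ ⟪x, α⟫ = 0 ∨ ⟪x, α⟫ = 1

def IsMinimalInCoset (Φ : Set E) (x : E) : Prop :=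
  ∀ q ∈ corootLattice Φ, ‖x‖ ≤ ‖x + q‖

def coweightAddSubgroup (Φ : Set E) : AddSubgroup E where
  carrier := coweightLattice Φ
  add_mem' {x y} hx hy α hα := by
    obtain ⟨m, hm⟩ := hx α hα
    obtain ⟨n, hn⟩ := hy α hα
    exact ⟨m + n, by rw [inner_add_left, hm, hn, Int.cast_add]⟩
  zero_mem' _ _ := ⟨0, by simp⟩
  neg_mem' {x} hx α hα := by
    obtain ⟨n, hn⟩ := hx α hα
    exact ⟨-n, by rw [inner_neg_left, hn, Int.cast_neg]⟩

theorem le_zero_of_mem_coweightLattice_of_lt_one {Φ : Set E} {x α : E}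
    (hx : x ∈ coweightLattice Φ) (hα : α ∈ Φ) (h : ⟪x, α⟫ < 1) : ⟪x, α⟫ ≤ 0 := by
  obtain ⟨n, hn⟩ := hx α hα
  rw [hn] at h ⊢
  have : n < 1 := by exact_mod_cast h
  exact_mod_cast (by omega : n ≤ 0)

theorem coroot_mem_corootLattice {Φ : Set E} {α : E} (hα : α ∈ Φ) : coroot α ∈ corootLattice Φ :=
  AddSubgroup.subset_closure ⟨α, hα, rfl⟩

theorem sum_map_coroot_mem_corootLattice {Φ : Set E} {t : Multiset E} (ht : ∀ α ∈ t, α ∈ Φ) :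
    (t.map coroot).sum ∈ corootLattice Φ :=
  AddSubgroup.multiset_sum_mem _ _ fun _ h => by
    obtain ⟨α, hα, rfl⟩ := Multiset.mem_map.1 h
    exact coroot_mem_corootLattice (ht α hα)

namespace IsRootSystem

variable {Φ : Set E}

theorem ne_zero (hΦ : IsRootSystem Φ) {α : E} (hα : α ∈ Φ) : α ≠ 0 :=
  fun h => hΦ.2.1 (h ▸ hα)

theorem rootReflection_mem (hΦ : IsRootSystem Φ) {α β : E} (hα : α ∈ Φ) (hβ : β ∈ Φ) :
    rootReflection α β ∈ Φ :=
  hΦ.2.2.2 α hα β hβ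

theorem neg_mem (hΦ : IsRootSystem Φ) {α : E} (hα : α ∈ Φ) : -α ∈ Φ := by
  have h := hΦ.rootReflection_mem hα hα
  rwa [rootReflection_apply_eq_sub_smul_coroot, coroot, smul_smul,
    mul_div_cancel₀ _ (by simpa using hΦ.ne_zero hα), two_smul, sub_add_cancel_left] at h

theorem forall_inner_rootReflection (hΦ : IsRootSystem Φ) {p : ℝ → Prop} {α x : E}
    (hα : α ∈ Φ) (hx : ∀ β ∈ Φ, p ⟪x, β⟫) : ∀ β ∈ Φ, p ⟪rootReflection α x, β⟫ :=
  fun β hβ => by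
    rw [inner_rootReflection_left]
    exact hx _ (hΦ.rootReflection_mem hα hβ)

theorem rootReflection_mem_coweightLattice (hΦ : IsRootSystem Φ) {α x : E} (hα : α ∈ Φ)
    (hx : x ∈ coweightLattice Φ) : rootReflection α x ∈ coweightLattice Φ :=
  hΦ.forall_inner_rootReflection (p := fun r => ∃ n : ℤ, r = n) hα hx

theorem isMinuscule_rootReflection (hΦ : IsRootSystem Φ) {α x : E} (hα : α ∈ Φ)
    (hx : IsMinuscule Φ x) : IsMinuscule Φ (rootReflection α x) :=
  hΦ.forall_inner_rootReflection (p := fun r => r = -1 ∨ r = 0 ∨ r = 1) hα hx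

theorem corootLattice_le_coweightAddSubgroup (hΦ : IsRootSystem Φ) :
    corootLattice Φ ≤ coweightAddSubgroup Φ := by
  rw [corootLattice, AddSubgroup.closure_le]
  rintro _ ⟨α, hα, rfl⟩ β hβ
  obtain ⟨n, hn⟩ := hΦ.2.2.1 α hα β hβ
  refine ⟨n, ?_⟩
  rw [real_inner_smul_left, ← hn, real_inner_comm β α]
  ring

theorem exists_multiset_of_mem_corootLattice (hΦ : IsRootSystem Φ) {q : E}
    (hq : q ∈ corootLattice Φ) :
    ∃ t : Multiset E, (∀ α ∈ t, α ∈ Φ) ∧ (t.map coroot).sum = q := by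
  induction hq using AddSubgroup.closure_induction with
  | mem _ h =>
    obtain ⟨α, hα, rfl⟩ := h
    exact ⟨{α}, by simpa using hα, by simp [coroot]⟩
  | zero => exact ⟨0, by simp, by simp⟩
  | add _ _ _ _ h₁ h₂ =>
    obtain ⟨t₁, ht₁, rfl⟩ := h₁
    obtain ⟨t₂, ht₂, rfl⟩ := h₂
    exact ⟨t₁ + t₂, by simpa [or_imp, forall_and] using ⟨ht₁, ht₂⟩, by simp⟩
  | neg _ _ h =>
    obtain ⟨t, ht, rfl⟩ := h
    refine ⟨t.map Neg.neg, by simpa using fun α hα => hΦ.neg_mem (ht α hα), ?_⟩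
    simp [Multiset.map_map, coroot_neg, Multiset.sum_map_neg]

theorem isMinuscule_of_isMinimalInCoset (hΦ : IsRootSystem Φ) {x : E}
    (hx : x ∈ coweightLattice Φ) (hmin : IsMinimalInCoset Φ x) : IsMinuscule Φ x := by
  have neg_one_le : ∀ α ∈ Φ, -1 ≤ ⟪x, α⟫ := fun α hα => by
    have hle := (sq_le_sq₀ (norm_nonneg _) (norm_nonneg _)).2
      (hmin _ (coroot_mem_corootLattice hα))
    have hpos : 0 < ‖coroot α‖ ^ 2 := by
      have := coroot_ne_zero (hΦ.ne_zero hα)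
      positivity
    rw [norm_add_coroot_sq] at hle
    nlinarith
  intro α hα
  have hle := neg_one_le α hα
  have hge := neg_one_le (-α) (hΦ.neg_mem hα)
  rw [inner_neg_right] at hge
  obtain ⟨n, hn⟩ := hx α hα
  rw [hn] at hle hge ⊢
  have : -1 ≤ n := by exact_mod_cast hle
  have : n ≤ 1 := by exact_mod_cast (by linarith : (n : ℝ) ≤ 1)
  rcases (by omega : n = -1 ∨ n = 0 ∨ n = 1) with rfl | rfl | rfl <;> simp

theorem sum_map_coroot_eq_zero (hΦ : IsRootSystem Φ) {x : E} (hx : x ∈ coweightLattice Φ)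
    (hxm : IsMinuscule Φ x) {t : Multiset E} (ht : ∀ α ∈ t, α ∈ Φ) (hA : ∀ α ∈ t, ⟪x, α⟫ ≠ -1)
    (hB : ∀ α ∈ t, ⟪x + (t.map coroot).sum, α⟫ < 1) : (t.map coroot).sum = 0 := by
  refine Multiset.sum_eq_zero_of_forall_inner_sum_nonpos ?_
  simp only [Multiset.mem_map, forall_exists_index, and_imp]
  rintro _ α hαt rfl
  have hα := ht α hαt
  have hxq : x + (t.map coroot).sum ∈ coweightLattice Φ := (coweightAddSubgroup Φ).add_mem hx
    (hΦ.corootLattice_le_coweightAddSubgroup (sum_map_coroot_mem_corootLattice ht))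
  have hxα : 0 ≤ ⟪x, α⟫ := by
    rcases hxm α hα with h | h | h
    exacts [absurd h (hA α hαt), h.ge, h ▸ zero_le_one]
  have hxqα := le_zero_of_mem_coweightLattice_of_lt_one hxq hα (hB α hαt)
  rw [inner_add_left] at hxqα
  have := two_mul_inner_coroot (t.map coroot).sum α
  rw [real_inner_comm]
  nlinarith [sq_nonneg ‖coroot α‖]

theorem norm_le_norm_add_sum_coroot (hΦ : IsRootSystem Φ) {x : E}
    (hx : x ∈ coweightLattice Φ) (hxm : IsMinuscule Φ x) (t : Multiset E)
    (ht : ∀ α ∈ t, α ∈ Φ) : ‖x‖ ≤ ‖x + (t.map coroot).sum‖ := by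
  classical
  have sum_eq {α : E} (hα : α ∈ t) :
      (t.map coroot).sum = coroot α + ((t.erase α).map coroot).sum := by
    conv_lhs => rw [← Multiset.cons_erase hα]
    rw [Multiset.map_cons, Multiset.sum_cons]
  have ht' {α : E} : ∀ β ∈ t.erase α, β ∈ Φ := fun β hβ => ht β (Multiset.mem_of_mem_erase hβ)
  by_cases hA : ∃ α ∈ t, ⟪x, α⟫ = -1
  · obtain ⟨α, hαt, hxα⟩ := hA
    have hα := ht α hαt
    calc ‖x‖ = ‖rootReflection α x‖ := (norm_rootReflection α x).symm
      _ ≤ ‖rootReflection α x + ((t.erase α).map coroot).sum‖ :=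
        hΦ.norm_le_norm_add_sum_coroot (hΦ.rootReflection_mem_coweightLattice hα hx)
          (hΦ.isMinuscule_rootReflection hα hxm) (t.erase α) ht'
      _ = ‖x + (t.map coroot).sum‖ := by
        rw [rootReflection_apply_eq_sub_smul_coroot, hxα, sum_eq hαt, neg_one_smul,
          sub_neg_eq_add, add_assoc]
  by_cases hB : ∃ α ∈ t, 1 ≤ ⟪x + (t.map coroot).sum, α⟫
  · obtain ⟨α, hαt, hα1⟩ := hB
    calc ‖x‖ ≤ ‖x + ((t.erase α).map coroot).sum‖ :=
          hΦ.norm_le_norm_add_sum_coroot hx hxm (t.erase α) ht'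
      _ = ‖x + (t.map coroot).sum - coroot α‖ := by rw [sum_eq hαt]; abel_nf
      _ ≤ ‖x + (t.map coroot).sum‖ := by
        rw [← sq_le_sq₀ (norm_nonneg _) (norm_nonneg _), norm_sub_coroot_sq]
        nlinarith [sq_nonneg ‖coroot α‖]
  push Not at hA hB
  rw [hΦ.sum_map_coroot_eq_zero hx hxm ht hA hB, add_zero]
termination_by t.card
decreasing_by all_goals classical exact Multiset.card_erase_lt_of_mem hαt

theorem isMinimalInCoset_iff_isMinuscule (hΦ : IsRootSystem Φ) {x : E}
    (hx : x ∈ coweightLattice Φ) : IsMinimalInCoset Φ x ↔ IsMinuscule Φ x := by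
  refine ⟨hΦ.isMinuscule_of_isMinimalInCoset hx, fun hxm q hq => ?_⟩
  obtain ⟨t, ht, rfl⟩ := hΦ.exists_multiset_of_mem_corootLattice hq
  exact hΦ.norm_le_norm_add_sum_coroot hx hxm t ht

theorem eq_zero_of_isMinuscule_of_mem_corootLattice (hΦ : IsRootSystem Φ) {q : E}
    (hq : q ∈ corootLattice Φ) (hqm : IsMinuscule Φ q) : q = 0 := by
  have hmin := (hΦ.isMinimalInCoset_iff_isMinuscule
    (hΦ.corootLattice_le_coweightAddSubgroup hq)).2 hqm (-q) ((corootLattice Φ).neg_mem hq)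
  simpa using hmin

theorem isMinuscule_sub (hΦ : IsRootSystem Φ) {x y : E} (hx : IsMinuscule Φ x)
    (hy : IsMinuscule Φ y) (h : ∀ α ∈ Φ, ⟪y, α⟫ = 1 → ⟪x, α⟫ ≠ -1) : IsMinuscule Φ (y - x) := by
  intro α hα
  have key : ¬(⟪y, α⟫ = 1 ∧ ⟪x, α⟫ = -1) ∧ ¬(⟪y, α⟫ = -1 ∧ ⟪x, α⟫ = 1) :=
    ⟨fun ⟨hy, hx⟩ => h α hα hy hx, fun ⟨hy, hx⟩ => h (-α) (hΦ.neg_mem hα)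
      (by rw [inner_neg_right, hy, neg_neg]) (by rw [inner_neg_right, hx])⟩
  revert key
  rw [inner_sub_left]
  rcases hx α hα with hx | hx | hx <;> rcases hy α hα with hy | hy | hy <;> norm_num [hx, hy]

theorem exists_weylGroup_eq_of_norm_sq_le (hΦ : IsRootSystem Φ) {δ : ℝ}
    (hδ : ∀ α ∈ Φ, δ ≤ ‖coroot α‖ ^ 2) (n : ℕ) {x y : E} (hxm : IsMinuscule Φ x)
    (hym : IsMinuscule Φ y) (hxy : y - x ∈ corootLattice Φ) (hn : ‖y - x‖ ^ 2 ≤ n * δ) :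
    ∃ w ∈ WeylGroup Φ, y = w x := by
  induction n generalizing y with
  | zero =>
    have : y - x = 0 := by simpa using hn
    exact ⟨1, one_mem _, by simpa [sub_eq_zero] using this⟩
  | succ n ih =>
    by_cases h : ∃ α ∈ Φ, ⟪y, α⟫ = 1 ∧ ⟪x, α⟫ = -1
    · obtain ⟨α, hα, hyα, hxα⟩ := h
      have hy' : rootReflection α y - x = y - x - coroot α := by
        rw [rootReflection_apply_eq_sub_smul_coroot, hyα, one_smul, sub_right_comm]
      obtain ⟨w, hw, hyw⟩ := ih (hΦ.isMinuscule_rootReflection hα hym)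
        (hy' ▸ sub_mem hxy (coroot_mem_corootLattice hα)) (by
          rw [hy', norm_sub_coroot_sq, inner_sub_left, hyα, hxα]
          push_cast at hn
          linarith [hδ α hα])
      have hsα : rootReflection α ∈ WeylGroup Φ := Subgroup.subset_closure ⟨α, hα, fun _ => rfl⟩
      refine ⟨rootReflection α * w, mul_mem hsα hw, ?_⟩
      rw [LinearEquiv.mul_apply, ← hyw, rootReflection_rootReflection]
    · push Not at h
      have := hΦ.eq_zero_of_isMinuscule_of_mem_corootLattice hxy (hΦ.isMinuscule_sub hxm hym h)
      exact ⟨1, one_mem _, by simpa [sub_eq_zero] using this⟩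

theorem exists_pos_le_norm_sq_coroot (hΦ : IsRootSystem Φ) :
    ∃ δ > 0, ∀ α ∈ Φ, δ ≤ ‖coroot α‖ ^ 2 :=
  hΦ.1.exists_pos_le_of_pos fun α hα => by
    have := coroot_ne_zero (hΦ.ne_zero hα)
    positivity

theorem exists_weylGroup_eq (hΦ : IsRootSystem Φ) {x y : E} (hxm : IsMinuscule Φ x)
    (hym : IsMinuscule Φ y) (hxy : y - x ∈ corootLattice Φ) : ∃ w ∈ WeylGroup Φ, y = w x := by
  obtain ⟨δ, hδ, hδα⟩ := hΦ.exists_pos_le_norm_sq_coroot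
  obtain ⟨n, hn⟩ := exists_nat_ge (‖y - x‖ ^ 2 / δ)
  exact hΦ.exists_weylGroup_eq_of_norm_sq_le hδα n hxm hym hxy
    ((div_le_iff₀ hδ).1 hn)

end IsRootSystem

end

theorem minimal_coweights_general {E : Type*} [NormedAddCommGroup E] [InnerProductSpace ℝ E]
    (Φ : Set E) (hΦ : IsRootSystem Φ) :
    (∀ x ∈ coweightLattice Φ,
      ((∀ q ∈ corootLattice Φ, ‖x‖ ≤ ‖x + q‖) ↔
        ∀ α ∈ Φ, ⟪x, α⟫ = -1 ∨ ⟪x, α⟫ = 0 ∨ ⟪x, α⟫ = 1)) ∧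
    (∀ x ∈ coweightLattice Φ, ∀ y ∈ coweightLattice Φ,
      y - x ∈ corootLattice Φ →
      (∀ q ∈ corootLattice Φ, ‖x‖ ≤ ‖x + q‖) →
      (∀ q ∈ corootLattice Φ, ‖y‖ ≤ ‖y + q‖) →
      ∃ w ∈ WeylGroup Φ, y = w x) :=
  ⟨fun _ hx => hΦ.isMinimalInCoset_iff_isMinuscule hx,
    fun _ hx _ hy hxy hxmin hymin => hΦ.exists_weylGroup_eq
      ((hΦ.isMinimalInCoset_iff_isMinuscule hx).1 hxmin)
      ((hΦ.isMinimalInCoset_iff_isMinuscule hy).1 hymin) hxy⟩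

/-- A coweight has minimal norm in its coroot-lattice coset iff it pairs with every root in
`{-1, 0, 1}`; and two minimal coweights in the same coset lie in the same Weyl group orbit. -/
theorem minimal_coweights {E : Type*} [NormedAddCommGroup E] [InnerProductSpace ℝ E]
    [FiniteDimensional ℝ E] (Φ : Set E) (hΦ : IsRootSystem Φ) :
    (∀ x ∈ coweightLattice Φ,
      ((∀ q ∈ corootLattice Φ, ‖x‖ ≤ ‖x + q‖) ↔
        ∀ α ∈ Φ, ⟪x, α⟫ = -1 ∨ ⟪x, α⟫ = 0 ∨ ⟪x, α⟫ = 1)) ∧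
    (∀ x ∈ coweightLattice Φ, ∀ y ∈ coweightLattice Φ,
      y - x ∈ corootLattice Φ →
      (∀ q ∈ corootLattice Φ, ‖x‖ ≤ ‖x + q‖) →
      (∀ q ∈ corootLattice Φ, ‖y‖ ≤ ‖y + q‖) →
      ∃ w ∈ WeylGroup Φ, y = w x) :=
  minimal_coweights_general Φ hΦ
end

section
/- Let s ≥ 0 be a real number and let a, b : ℤ → ℂ satisfy |a|_s := Σ_{k∈ℤ} (1+|k|)^s·|a(k)| < ∞ and ‖b‖_s := (Σ_{k∈ℤ} (1+|k|)^{2s}·|b(k)|²)^{1/2} < ∞. Then for every k ∈ ℤ the convolution (a∗b)(k) := Σ_{j∈ℤ} a(j)·b(k−j) converges absolutely, and (Σ_{k∈ℤ} (1+|k|)^{2s}·|(a∗b)(k)|²)^{1/2} ≤ |a|_s · ‖b‖_s. -/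
/-!
Put `A k = ⟨k⟩^s |a k|` and `B k = ⟨k⟩^s |b k|` with `⟨k⟩ = 1 + |k|`. Since `⟨j + l⟩ ≤ ⟨j⟩ ⟨l⟩`,
the weighted convolution is dominated pointwise, `⟨k⟩^s |(a ∗ b) k| ≤ (A ∗ B) k`, so it suffices
to prove Young's inequality `‖A ∗ B‖₂ ≤ ‖A‖₁ ‖B‖₂` for nonnegative sequences. That follows from the
weighted Cauchy–Schwarz inequality `(∑ⱼ Aⱼ Bₖ₋ⱼ)² ≤ (∑ⱼ Aⱼ) (∑ⱼ Aⱼ Bₖ₋ⱼ²)`, summed over `k` after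
exchanging the two sums; in `ℝ≥0∞` this needs no summability bookkeeping.
-/

open scoped ENNReal NNReal

namespace ENNReal

theorem inner_le_weight_mul_Lp_tsum {ι : Type*} (w f : ι → ℝ≥0∞) {p : ℝ} (hp : 1 ≤ p) :
    ∑' i, w i * f i ≤ (∑' i, w i) ^ (1 - p⁻¹) * (∑' i, w i * f i ^ p) ^ p⁻¹ := by
  have hp₁ : 0 ≤ 1 - p⁻¹ := sub_nonneg.2 (inv_le_one_of_one_le₀ hp)
  rw [ENNReal.tsum_eq_iSup_sum]
  refine iSup_le fun s => (inner_le_weight_mul_Lp_of_nonneg s hp w f).trans ?_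
  gcongr <;> exact ENNReal.sum_le_tsum s

theorem sq_inner_le_weight_mul_L2_tsum {ι : Type*} (w f : ι → ℝ≥0∞) :
    (∑' i, w i * f i) ^ 2 ≤ (∑' i, w i) * ∑' i, w i * f i ^ 2 := by
  calc (∑' i, w i * f i) ^ 2
      ≤ ((∑' i, w i) ^ (1 - 2⁻¹ : ℝ) * (∑' i, w i * f i ^ (2 : ℝ)) ^ (2⁻¹ : ℝ)) ^ 2 :=
        pow_le_pow_left₀ zero_le (inner_le_weight_mul_Lp_tsum w f one_le_two) 2
    _ = (∑' i, w i) * ∑' i, w i * f i ^ 2 := by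
      simp only [mul_pow, ← ENNReal.rpow_mul_natCast, ENNReal.rpow_two]
      norm_num

theorem tsum_sq_conv_le {G : Type*} [AddGroup G] (f g : G → ℝ≥0∞) :
    ∑' k, (∑' j, f j * g (k - j)) ^ 2 ≤ (∑' j, f j) ^ 2 * ∑' k, g k ^ 2 := by
  have translate (j : G) : ∑' k, g (k - j) ^ 2 = ∑' k, g k ^ 2 :=
    (Equiv.subRight j).tsum_eq fun k => g k ^ 2
  calc ∑' k, (∑' j, f j * g (k - j)) ^ 2
      ≤ ∑' k, (∑' j, f j) * ∑' j, f j * g (k - j) ^ 2 :=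
        ENNReal.tsum_le_tsum fun k => sq_inner_le_weight_mul_L2_tsum _ _
    _ = (∑' j, f j) ^ 2 * ∑' k, g k ^ 2 := by
      simp_rw [ENNReal.tsum_mul_left]
      rw [ENNReal.tsum_comm]
      simp_rw [ENNReal.tsum_mul_left, translate, ENNReal.tsum_mul_right]
      ring

end ENNReal

theorem NNReal.summable_and_tsum_sq_conv_le {G : Type*} [AddGroup G] {f g : G → ℝ≥0}
    (hf : Summable f) (hg : Summable fun k => g k ^ 2) :
    (∀ k, Summable fun j => f j * g (k - j)) ∧
      Summable (fun k => (∑' j, f j * g (k - j)) ^ 2) ∧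
      ∑' k, (∑' j, f j * g (k - j)) ^ 2 ≤ (∑' j, f j) ^ 2 * ∑' k, g k ^ 2 := by
  have hE : ∑' k, (∑' j, (f j : ℝ≥0∞) * g (k - j)) ^ 2 ≤
      ↑((∑' j, f j) ^ 2 * ∑' k, g k ^ 2) := by
    push_cast [ENNReal.coe_tsum hf, ENNReal.coe_tsum hg]
    exact ENNReal.tsum_sq_conv_le _ _
  have hfin := ne_top_of_le_ne_top ENNReal.coe_ne_top hE
  have hinner (k : G) : Summable fun j => f j * g (k - j) := by
    rw [← ENNReal.tsum_coe_ne_top_iff_summable]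
    push_cast
    exact (ENNReal.pow_ne_top_iff.1 (ne_top_of_le_ne_top hfin (ENNReal.le_tsum k))).resolve_right
      two_ne_zero
  have hcoe (k : G) : ∑' j, (f j : ℝ≥0∞) * g (k - j) = ↑(∑' j, f j * g (k - j)) := by
    simp [ENNReal.coe_tsum (hinner k)]
  simp_rw [hcoe, ← ENNReal.coe_pow] at hE hfin
  have hsum := ENNReal.tsum_coe_ne_top_iff_summable.1 hfin
  rw [← ENNReal.coe_tsum hsum, ENNReal.coe_le_coe] at hE
  exact ⟨hinner, hsum, hE⟩

theorem Real.summable_and_tsum_sq_conv_le {G : Type*} [AddGroup G] {f g : G → ℝ}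
    (hf₀ : ∀ j, 0 ≤ f j) (hg₀ : ∀ j, 0 ≤ g j) (hf : Summable f) (hg : Summable fun k => g k ^ 2) :
    (∀ k, Summable fun j => f j * g (k - j)) ∧
      Summable (fun k => (∑' j, f j * g (k - j)) ^ 2) ∧
      ∑' k, (∑' j, f j * g (k - j)) ^ 2 ≤ (∑' j, f j) ^ 2 * ∑' k, g k ^ 2 := by
  lift f to G → ℝ≥0 using hf₀
  lift g to G → ℝ≥0 using hg₀
  simp only [← NNReal.coe_mul, ← NNReal.coe_pow, ← NNReal.coe_tsum, NNReal.summable_coe,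
    NNReal.coe_le_coe] at hf hg ⊢
  exact NNReal.summable_and_tsum_sq_conv_le hf hg

section WeightedConvolution

variable {G R : Type*} [AddGroup G] [NormedRing R] {w : G → ℝ} {a b : G → R} {k : G}

theorem summable_norm_mul_sub_of_weighted (hw : ∀ j, 1 ≤ w j)
    (h : Summable fun j => w j * ‖a j‖ * (w (k - j) * ‖b (k - j)‖)) :
    Summable fun j => ‖a j * b (k - j)‖ :=
  h.of_nonneg_of_le (fun _ => norm_nonneg _) fun j =>
    (norm_mul_le _ _).trans <| mul_le_mul (le_mul_of_one_le_left (norm_nonneg _) (hw j))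
      (le_mul_of_one_le_left (norm_nonneg _) (hw _)) (norm_nonneg _)
      (mul_nonneg (zero_le_one.trans (hw j)) (norm_nonneg _))

theorem mul_norm_tsum_mul_sub_le (hw₀ : ∀ j, 0 ≤ w j) (hw : ∀ j, w k ≤ w j * w (k - j))
    (hab : Summable fun j => ‖a j * b (k - j)‖)
    (h : Summable fun j => w j * ‖a j‖ * (w (k - j) * ‖b (k - j)‖)) :
    w k * ‖∑' j, a j * b (k - j)‖ ≤ ∑' j, w j * ‖a j‖ * (w (k - j) * ‖b (k - j)‖) :=
  calc w k * ‖∑' j, a j * b (k - j)‖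
      ≤ w k * ∑' j, ‖a j * b (k - j)‖ := by gcongr; exacts [hw₀ k, norm_tsum_le_tsum_norm hab]
    _ = ∑' j, w k * ‖a j * b (k - j)‖ := tsum_mul_left.symm
    _ ≤ ∑' j, w j * ‖a j‖ * (w (k - j) * ‖b (k - j)‖) := by
      refine (hab.mul_left _).tsum_le_tsum (fun j => ?_) h
      calc w k * ‖a j * b (k - j)‖ ≤ (w j * w (k - j)) * (‖a j‖ * ‖b (k - j)‖) := by
            gcongr
            exacts [mul_nonneg (hw₀ j) (hw₀ _), hw j, norm_mul_le _ _]
        _ = _ := by ring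

end WeightedConvolution

theorem one_add_abs_add_rpow_le {s : ℝ} (hs : 0 ≤ s) (x y : ℝ) :
    (1 + |x + y|) ^ s ≤ (1 + |x|) ^ s * (1 + |y|) ^ s := by
  rw [← Real.mul_rpow (by positivity) (by positivity)]
  gcongr
  nlinarith [abs_add_le x y, abs_nonneg x, abs_nonneg y]

/-- Sobolev product estimate for sequences: if `|a|_s < ∞` and `‖b‖_s < ∞` then the
convolution `a ∗ b` converges absolutely and `‖a ∗ b‖_s ≤ |a|_s · ‖b‖_s`. -/
theorem sobolev_convolution_estimate (s : ℝ) (hs : 0 ≤ s) (a b : ℤ → ℂ)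
    (ha : Summable fun k : ℤ => (1 + |(k : ℝ)|) ^ s * ‖a k‖)
    (hb : Summable fun k : ℤ => (1 + |(k : ℝ)|) ^ (2 * s) * ‖b k‖ ^ 2) :
    (∀ k : ℤ, Summable fun j : ℤ => ‖a j * b (k - j)‖) ∧
    (Summable fun k : ℤ =>
      (1 + |(k : ℝ)|) ^ (2 * s) * ‖∑' j : ℤ, a j * b (k - j)‖ ^ 2) ∧
    Real.sqrt (∑' k : ℤ, (1 + |(k : ℝ)|) ^ (2 * s) * ‖∑' j : ℤ, a j * b (k - j)‖ ^ 2) ≤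
      (∑' k : ℤ, (1 + |(k : ℝ)|) ^ s * ‖a k‖) *
        Real.sqrt (∑' k : ℤ, (1 + |(k : ℝ)|) ^ (2 * s) * ‖b k‖ ^ 2) := by
  set w : ℤ → ℝ := fun k => (1 + |(k : ℝ)|) ^ s
  have hw₁ (k : ℤ) : 1 ≤ w k := Real.one_le_rpow (by simp) hs
  have hw (k j : ℤ) : w k ≤ w j * w (k - j) := by
    simpa [w] using one_add_abs_add_rpow_le hs j ((k - j : ℤ) : ℝ)
  have hw_sq (k : ℤ) : (1 + |(k : ℝ)|) ^ (2 * s) = w k ^ 2 := by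
    rw [mul_comm, ← Real.rpow_mul_natCast (by positivity)]
    norm_num
  simp only [hw_sq, ← mul_pow] at hb ⊢
  obtain ⟨hAB, hAB₂, hyoung⟩ := Real.summable_and_tsum_sq_conv_le
    (fun j => by positivity) (fun j => by positivity) ha hb
  have hab (k : ℤ) : Summable fun j => ‖a j * b (k - j)‖ :=
    summable_norm_mul_sub_of_weighted hw₁ (hAB k)
  have hconv (k : ℤ) : (w k * ‖∑' j, a j * b (k - j)‖) ^ 2 ≤
      (∑' j, w j * ‖a j‖ * (w (k - j) * ‖b (k - j)‖)) ^ 2 := by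
    gcongr
    exact mul_norm_tsum_mul_sub_le (fun j => by positivity) (hw k) (hab k) (hAB k)
  have hsum := hAB₂.of_nonneg_of_le (fun k => by positivity) hconv
  refine ⟨hab, hsum, ?_⟩
  calc √(∑' k, (w k * ‖∑' j, a j * b (k - j)‖) ^ 2)
      ≤ √((∑' j, w j * ‖a j‖) ^ 2 * ∑' k, (w k * ‖b k‖) ^ 2) :=
        Real.sqrt_le_sqrt ((hsum.tsum_le_tsum hconv hAB₂).trans hyoung)
    _ = (∑' j, w j * ‖a j‖) * √(∑' k, (w k * ‖b k‖) ^ 2) := by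
      rw [Real.sqrt_mul (sq_nonneg _), Real.sqrt_sq (tsum_nonneg fun j => by positivity)]
end

section
/- Let 𝔸 be a complex unital Banach algebra and X, Y ∈ 𝔸. Then the map s ↦ exp(X + sY) from ℝ to 𝔸 is differentiable at s = 0 with derivative ∫₀¹ exp((1−t)·X) · Y · exp(t·X) dt. Equivalently, the derivative at s = 0 of s ↦ exp(−X)·exp(X + sY) equals ∫₀¹ exp(−t·X) · Y · exp(t·X) dt, and the derivative at s = 0 of s ↦ exp(X + sY)·exp(−X) equals ∫₀¹ exp(t·X) · Y · exp(−t·X) dt. -/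
/-!
For fixed `s`, the derivative of `u ↦ exp ((1 - u) • X) * exp (u • (X + s • Y))` is
`s • (exp ((1 - u) • X) * Y * exp (u • (X + s • Y)))`, so the fundamental theorem of calculus
writes `exp (X + s • Y) - exp X` as `s` times an integral depending continuously on `s`; the
difference quotient therefore tends to the value of that integral at `s = 0`. Multiplying by
`exp (-X)` on either side (and substituting `t ↦ 1 - t` on the right) gives the logarithmic forms.
A complex Banach algebra is a real one by restriction of scalars, and a normed group carries at
most one real normed-space structure, so the given one is that restriction.
-/

open MeasureTheory Filter Topology NormedSpace intervalIntegral

instance subsingleton_real_normedSpace (E : Type*) [NormedAddCommGroup E] :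
    Subsingleton (NormedSpace ℝ E) where
  allEq P Q := by
    have hP := (letI := P; (inferInstance : ContinuousSMul ℝ E))
    have hQ := (letI := Q; (inferInstance : ContinuousSMul ℝ E))
    have h_smul : ∀ (r : ℝ) (x : E), (letI := P; r • x) = (letI := Q; r • x) := fun r x =>
      @map_real_smul E _ P.toModule _ hP E _ Q.toModule _ hQ _ (E →+ E) _ _
        (AddMonoidHom.id E) continuous_id r x
    cases P; cases Q
    congr
    exact Module.ext' _ _ h_smul

section RealBanachAlgebra

variable {𝔸 : Type*} [NormedRing 𝔸] [NormedAlgebra ℝ 𝔸] [CompleteSpace 𝔸]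

theorem exp_smul_mul_exp_smul (a b : ℝ) (Z : 𝔸) :
    exp (a • Z) * exp (b • Z) = exp ((a + b) • Z) := by
  let : NormedAlgebra ℚ 𝔸 := NormedAlgebra.restrictScalars ℚ ℝ 𝔸
  rw [add_smul, exp_add_of_commute (((Commute.refl Z).smul_left a).smul_right b)]

theorem continuous_exp_one_sub_smul_mul_mul_exp_smul (X Y : 𝔸) :
    Continuous fun p : ℝ × ℝ => exp ((1 - p.2) • X) * Y * exp (p.2 • (X + p.1 • Y)) := by
  let : NormedAlgebra ℚ 𝔸 := NormedAlgebra.restrictScalars ℚ ℝ 𝔸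
  fun_prop

theorem hasDerivAt_exp_one_sub_smul_mul_exp_smul (X Y : 𝔸) (s t : ℝ) :
    HasDerivAt (fun u : ℝ => exp ((1 - u) • X) * exp (u • (X + s • Y)))
      (s • (exp ((1 - t) • X) * Y * exp (t • (X + s • Y)))) t := by
  convert ((hasDerivAt_exp_smul_const X (1 - t)).comp_const_sub 1 t).mul
    (hasDerivAt_exp_smul_const' (X + s • Y) t) using 1
  · rfl
  · simp only [neg_mul, mul_add, add_mul, mul_assoc, neg_add_cancel_left, smul_mul_assoc,
      mul_smul_comm]

theorem exp_add_smul_sub_exp (X Y : 𝔸) (s : ℝ) :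
    exp (X + s • Y) - exp X =
      s • ∫ t in (0 : ℝ)..1, exp ((1 - t) • X) * Y * exp (t • (X + s • Y)) := by
  have h_cont : Continuous fun t : ℝ => exp ((1 - t) • X) * Y * exp (t • (X + s • Y)) :=
    (continuous_exp_one_sub_smul_mul_mul_exp_smul X Y).comp (continuous_const.prodMk continuous_id)
  rw [← intervalIntegral.integral_smul, integral_eq_sub_of_hasDerivAt
    (fun t _ => hasDerivAt_exp_one_sub_smul_mul_exp_smul X Y s t)
    ((h_cont.const_smul s).intervalIntegrable 0 1)]
  simp

theorem hasDerivAt_exp_add_smul (X Y : 𝔸) :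
    HasDerivAt (fun s : ℝ => exp (X + s • Y))
      (∫ t in (0 : ℝ)..1, exp ((1 - t) • X) * Y * exp (t • X)) 0 := by
  set g : ℝ → 𝔸 := fun s =>
    ∫ t in (0 : ℝ)..1, exp ((1 - t) • X) * Y * exp (t • (X + s • Y))
  have hg : Continuous g := continuous_parametric_intervalIntegral_of_continuous'
    (continuous_exp_one_sub_smul_mul_mul_exp_smul X Y) 0 1
  have h_slope : g =ᶠ[𝓝[≠] 0] slope (fun s => exp (X + s • Y)) 0 := by
    filter_upwards [self_mem_nhdsWithin] with s hs
    rw [slope_def_module, sub_zero, zero_smul, add_zero, exp_add_smul_sub_exp,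
      inv_smul_smul₀ hs]
  simpa [g] using hasDerivAt_iff_tendsto_slope.2
    (((hg.tendsto 0).mono_left nhdsWithin_le_nhds).congr' h_slope)

theorem intervalIntegrable_exp_one_sub_smul_mul_mul_exp_smul (X Y : 𝔸) :
    IntervalIntegrable (fun t : ℝ => exp ((1 - t) • X) * Y * exp (t • X)) volume 0 1 := by
  have h_cont : Continuous fun t : ℝ => ((0 : ℝ), t) := continuous_const.prodMk continuous_id
  simpa using
    ((continuous_exp_one_sub_smul_mul_mul_exp_smul X Y).comp' h_cont).intervalIntegrable 0 1

theorem hasDerivAt_exp_neg_mul_exp_add_smul (X Y : 𝔸) :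
    HasDerivAt (fun s : ℝ => exp (-X) * exp (X + s • Y))
      (∫ t in (0 : ℝ)..1, exp (-(t • X)) * Y * exp (t • X)) 0 := by
  have h_exp (t : ℝ) : exp (-X) * exp ((1 - t) • X) = exp (-(t • X)) := by
    rw [← neg_one_smul ℝ X, exp_smul_mul_exp_smul, ← neg_smul]
    congr 2
    ring
  convert (hasDerivAt_exp_add_smul X Y).const_mul (exp (-X)) using 1
  refine Eq.trans ?_ ((ContinuousLinearMap.mul ℝ 𝔸 (exp (-X))).intervalIntegral_comp_comm
    (intervalIntegrable_exp_one_sub_smul_mul_mul_exp_smul X Y))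
  simp only [ContinuousLinearMap.mul_apply', ← mul_assoc, h_exp]

theorem hasDerivAt_exp_add_smul_mul_exp_neg (X Y : 𝔸) :
    HasDerivAt (fun s : ℝ => exp (X + s • Y) * exp (-X))
      (∫ t in (0 : ℝ)..1, exp (t • X) * Y * exp (-(t • X))) 0 := by
  have h_exp (t : ℝ) : exp (t • X) * exp (-X) = exp (-((1 - t) • X)) := by
    rw [← neg_one_smul ℝ X, exp_smul_mul_exp_smul, ← neg_smul]
    congr 2
    ring
  convert (hasDerivAt_exp_add_smul X Y).mul_const (exp (-X)) using 1
  refine Eq.trans ?_ (((ContinuousLinearMap.mul ℝ 𝔸).flip (exp (-X))).intervalIntegral_comp_comm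
    (intervalIntegrable_exp_one_sub_smul_mul_mul_exp_smul X Y))
  simp only [ContinuousLinearMap.flip_apply, ContinuousLinearMap.mul_apply', mul_assoc, h_exp]
  simpa using (integral_comp_sub_left (fun t : ℝ => exp (t • X) * (Y * exp (-(t • X)))) 1
    (a := 0) (b := 1)).symm

end RealBanachAlgebra

theorem duhamel_formula_general (𝔸 : Type*) [NormedRing 𝔸] [NormedAlgebra ℂ 𝔸] [CompleteSpace 𝔸]
    [NormedSpace ℝ 𝔸] (X Y : 𝔸) :
    HasDerivAt (fun s : ℝ => NormedSpace.exp (X + (s : ℂ) • Y))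
      (∫ t in (0 : ℝ)..1, NormedSpace.exp (((1 - t : ℝ) : ℂ) • X) * Y *
        NormedSpace.exp (((t : ℝ) : ℂ) • X)) 0 ∧
    HasDerivAt (fun s : ℝ => NormedSpace.exp (-X) * NormedSpace.exp (X + (s : ℂ) • Y))
      (∫ t in (0 : ℝ)..1, NormedSpace.exp (-(((t : ℝ) : ℂ) • X)) * Y *
        NormedSpace.exp (((t : ℝ) : ℂ) • X)) 0 ∧
    HasDerivAt (fun s : ℝ => NormedSpace.exp (X + (s : ℂ) • Y) * NormedSpace.exp (-X))
      (∫ t in (0 : ℝ)..1, NormedSpace.exp (((t : ℝ) : ℂ) • X) * Y *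
        NormedSpace.exp (-(((t : ℝ) : ℂ) • X))) 0 := by
  obtain rfl : ‹NormedSpace ℝ 𝔸› = NormedSpace.complexToReal := Subsingleton.elim _ _
  simp only [Complex.coe_smul]
  exact ⟨hasDerivAt_exp_add_smul X Y, hasDerivAt_exp_neg_mul_exp_add_smul X Y,
    hasDerivAt_exp_add_smul_mul_exp_neg X Y⟩

/-- Duhamel's formula: the derivative at `s = 0` of `s ↦ exp(X + sY)` in a complex unital
Banach algebra is `∫₀¹ exp((1−t)X) · Y · exp(tX) dt`, together with its left and right
logarithmic-derivative forms. -/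
theorem duhamel_formula (𝔸 : Type*) [NormedRing 𝔸] [NormedAlgebra ℂ 𝔸] [CompleteSpace 𝔸]
    [NormedSpace ℝ 𝔸] [IsScalarTower ℝ ℂ 𝔸] (X Y : 𝔸) :
    HasDerivAt (fun s : ℝ => NormedSpace.exp (X + (s : ℂ) • Y))
      (∫ t in (0 : ℝ)..1, NormedSpace.exp (((1 - t : ℝ) : ℂ) • X) * Y *
        NormedSpace.exp (((t : ℝ) : ℂ) • X)) 0 ∧
    HasDerivAt (fun s : ℝ => NormedSpace.exp (-X) * NormedSpace.exp (X + (s : ℂ) • Y))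
      (∫ t in (0 : ℝ)..1, NormedSpace.exp (-(((t : ℝ) : ℂ) • X)) * Y *
        NormedSpace.exp (((t : ℝ) : ℂ) • X)) 0 ∧
    HasDerivAt (fun s : ℝ => NormedSpace.exp (X + (s : ℂ) • Y) * NormedSpace.exp (-X))
      (∫ t in (0 : ℝ)..1, NormedSpace.exp (((t : ℝ) : ℂ) • X) * Y *
        NormedSpace.exp (-(((t : ℝ) : ℂ) • X))) 0 :=
  duhamel_formula_general 𝔸 X Y
end

section
/- Let 𝔸 be a Banach algebra and a, b ∈ 𝔸 such that the commutator [a, b] := a·b − b·a commutes with both a and b. Then [a, exp(b)] = [a, b]·exp(b), and exp(a)·exp(b) = exp([a, b])·exp(b)·exp(a). -/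
/-!
Write `c = [a, b]`. Since `c` commutes with `b`, `a bⁿ⁺¹ - bⁿ⁺¹ a = (n + 1) c bⁿ`, and summing
the exponential series termwise gives `[a, exp b] = c exp b`. Read as `exp b (a + c) = a exp b`,
this says that `exp b` intertwines `a + c` with `a`, hence also `exp (a + c)` with `exp a`;
as `c` commutes with `a` and `exp b`, `exp b exp (a + c) = exp c exp b exp a`.
-/

open NormedSpace Nat

theorem mul_pow_succ_sub_pow_succ_mul {R : Type*} [Ring R] {a b : R}
    (h : Commute (a * b - b * a) b) (n : ℕ) :
    a * b ^ (n + 1) - b ^ (n + 1) * a = (n + 1) • ((a * b - b * a) * b ^ n) := by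
  induction n with
  | zero => simp
  | succ n ih =>
    calc a * b ^ (n + 2) - b ^ (n + 2) * a
        = (a * b ^ (n + 1) - b ^ (n + 1) * a) * b + b ^ (n + 1) * (a * b - b * a) := by
          simp only [pow_succ _ (n + 1)]; noncomm_ring
      _ = (n + 1 + 1) • ((a * b - b * a) * b ^ (n + 1)) := by
          rw [ih, ← (h.pow_right (n + 1)).eq, smul_mul_assoc, mul_assoc, ← pow_succ, ← succ_nsmul]

section Exp

variable {𝔸 : Type*} [NormedRing 𝔸] [NormedAlgebra ℚ 𝔸] [CompleteSpace 𝔸]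

theorem mul_exp_sub_exp_mul_of_commute {a b : 𝔸} (h : Commute (a * b - b * a) b) :
    a * exp b - exp b * a = (a * b - b * a) * exp b := by
  have hb := exp_series_hasSum_exp' (𝕂 := ℚ) b
  have hbracket : HasSum (fun n ↦ (n !⁻¹ : ℚ) • (a * b ^ n - b ^ n * a))
      (a * exp b - exp b * a) := by
    simpa only [mul_smul_comm, smul_mul_assoc, smul_sub] using (hb.mul_left a).sub (hb.mul_right a)
  rw [← hasSum_nat_add_iff' 1] at hbracket
  simp only [Finset.sum_range_one, pow_zero, mul_one, one_mul, sub_self, smul_zero,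
    sub_zero] at hbracket
  have hterm (n : ℕ) : ((n + 1)! ⁻¹ : ℚ) • (a * b ^ (n + 1) - b ^ (n + 1) * a) =
      (n !⁻¹ : ℚ) • ((a * b - b * a) * b ^ n) := by
    rw [mul_pow_succ_sub_pow_succ_mul h, ← Nat.cast_smul_eq_nsmul ℚ, smul_smul]
    congr 1
    push_cast [Nat.factorial_succ]
    field_simp
  simp only [hterm] at hbracket
  exact hbracket.unique (by simpa only [mul_smul_comm] using hb.mul_left (a * b - b * a))

theorem semiconjBy_exp_add_commutator {a b : 𝔸} (h : Commute (a * b - b * a) b) :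
    SemiconjBy (exp b) (a + (a * b - b * a)) a := by
  rw [SemiconjBy, mul_add, ← (h.exp_right).eq, ← mul_exp_sub_exp_mul_of_commute h]
  abel

end Exp

/-- If the commutator `[a, b] = ab − ba` commutes with both `a` and `b` in a Banach algebra,
then `[a, exp b] = [a, b]·exp b` and `exp a · exp b = exp [a, b] · exp b · exp a`. -/
theorem exp_commutator_formulas (𝔸 : Type*) [NormedRing 𝔸] [NormedAlgebra ℝ 𝔸]
    [CompleteSpace 𝔸] (a b : 𝔸)
    (h₁ : (a * b - b * a) * a = a * (a * b - b * a))
    (h₂ : (a * b - b * a) * b = b * (a * b - b * a)) :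
    a * NormedSpace.exp b - NormedSpace.exp b * a =
      (a * b - b * a) * NormedSpace.exp b ∧
    NormedSpace.exp a * NormedSpace.exp b =
      NormedSpace.exp (a * b - b * a) * NormedSpace.exp b * NormedSpace.exp a := by
  -- `exp` does not depend on the scalar field, so we may view `𝔸` as a `ℚ`-algebra.
  let _ : NormedAlgebra ℚ 𝔸 := NormedAlgebra.restrictScalars ℚ ℝ 𝔸
  refine ⟨mul_exp_sub_exp_mul_of_commute h₂, ?_⟩
  calc exp a * exp b = exp b * exp (a * b - b * a + a) := by
        rw [add_comm]; exact ((semiconjBy_exp_add_commutator h₂).exp_right).symm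
    _ = exp (a * b - b * a) * exp b * exp a := by
        rw [exp_add_of_commute h₁, ← mul_assoc, ((Commute.exp_right h₂).exp_left).eq]
end

section
/- Let V be a normed vector space over ℝ or ℂ, A : V → V a linear map, and (X_i)_{i∈I} a family of linear maps V → V such that for every ξ ∈ V: (a) ‖X_i ξ‖ ≤ ‖A ξ‖ for all i ∈ I; and (b) ‖((ad X_{i_n}) ∘ ⋯ ∘ (ad X_{i_1}))(A) ξ‖ ≤ n!·‖A ξ‖ for every n ≥ 1 and all i_1, …, i_n ∈ I, where (ad X)(B) := X∘B − B∘X. Then there exists a constant M > 0 such that ‖X_{i_n} ⋯ X_{i_1} ξ‖ ≤ n!·Mⁿ holds for every n ≥ 1, all i_1, …, i_n ∈ I, and every ξ ∈ V satisfying ‖A^m ξ‖ ≤ m! for all integers m ≥ 0. -/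
/-!
Write `W_u = X_{u₁} ⋯ X_{uₙ}`. The heart of the proof is the estimate
`‖A W_u A^m ξ‖ ≤ (n + m + 1)! 3ⁿ`, by strong induction on `n`.
Write `A W_u = W_u A - [W_u, A]`: the first term is `X_{u₁} W_{u'} A^{m+1} ξ`,
dominated by `A W_{u'} A^{m+1} ξ`. Moving the letters of `W_u` one at a time past a
nested commutator `B` (`X B = B X + [X, B]`) expands `[W_u, A]` as a sum over the
nonempty subwords `J` of `u` of `ad_J(A) W_{u ∖ J}`. There are `C(n, j)` terms with
`|J| = j`, each bounded by `j! ‖A W_{u ∖ J} A^m ξ‖ ≤ j! (n - j + m + 1)! 3^{n-j}`, and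
`C(n, j) j! (n - j + m + 1)! ≤ (n + m + 1)!`, so a geometric sum closes the induction.
-/

open Finset
open scoped Nat

theorem Nat.choose_mul_factorial_mul_factorial_add_le {n k : ℕ} (h : k ≤ n) (m : ℕ) :
    n.choose k * k ! * (n - k + m)! ≤ (n + m)! :=
  calc n.choose k * k ! * (n - k + m)! ≤ (n + m).choose k * k ! * (n + m - k)! := by
        rw [Nat.sub_add_comm h]
        gcongr
        omega
    _ = (n + m)! := Nat.choose_mul_factorial_mul_factorial (by omega)

theorem sum_range_succ_choose_succ_mul {R : Type*} [CommSemiring R] (n : ℕ) (f : ℕ → R) :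
    ∑ j ∈ range (n + 1), ((n + 1).choose (j + 1) : R) * f j =
      ∑ j ∈ range n, (n.choose (j + 1) : R) * f j +
        (f 0 + ∑ j ∈ range n, (n.choose (j + 1) : R) * f (j + 1)) := by
  simp only [Nat.choose_succ_succ, Nat.cast_add, add_mul, sum_add_distrib]
  rw [sum_range_succ (fun j => (n.choose (j + 1) : R) * f j), Nat.choose_succ_self,
    sum_range_succ']
  simp only [Nat.cast_zero, zero_mul, add_zero, Nat.choose_zero_right, Nat.cast_one, one_mul]
  ring

theorem three_pow_add_sum_range_three_pow_sub_le (n : ℕ) :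
    3 ^ n + ∑ j ∈ range (n + 1), 3 ^ (n - j) ≤ 3 ^ (n + 1) := by
  have hreflect : ∑ j ∈ range (n + 1), 3 ^ (n - j) = ∑ j ∈ range (n + 1), 3 ^ j := by
    simpa using sum_range_reflect (fun j => 3 ^ j) (n + 1)
  have hgeom : ∑ j ∈ range n, 3 ^ j < 3 ^ n := Nat.geomSum_lt (by norm_num) (by simp)
  rw [hreflect, sum_range_succ, pow_succ]
  omega

def nestedCommutator {S I : Type*} [Ring S] (X : I → S) (A : S) (l : List I) : S :=
  l.foldr (fun i B => X i * B - B * X i) A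

section Domination

variable {R V I : Type*} [Ring R] [SeminormedAddCommGroup V] [Module R V]
  {X : I → Module.End R V} {A : Module.End R V}

theorem norm_commutator_prod_nestedCommutator_apply_le
    (hb : ∀ l : List I, l ≠ [] → ∀ v : V,
      ‖nestedCommutator X A l v‖ ≤ l.length ! * ‖A v‖)
    {η : V} {g : ℕ → ℝ} (p s t : List I)
    (hg : ∀ w : List I, w.length < p.length + t.length →
      ‖A ((w.map X).prod η)‖ ≤ g w.length) :
    ‖((p.map X).prod * nestedCommutator X A s - nestedCommutator X A s * (p.map X).prod)
        ((t.map X).prod η)‖ ≤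
      ∑ j ∈ range p.length, (p.length.choose (j + 1) : ℝ) *
        ((s.length + j + 1)! * g (p.length + t.length - (j + 1))) := by
  induction p using List.reverseRecOn generalizing s t with
  | nil => simp
  | append_singleton q i ih =>
    set W := (q.map X).prod
    set Wt := (t.map X).prod
    set B := nestedCommutator X A s
    set C := nestedCommutator X A (i :: s)
    -- the last letter `X i` of the word either passes `B` or is absorbed into `C = [X i, B]`
    have hsplit : ((q ++ [i]).map X).prod * B - B * ((q ++ [i]).map X).prod
        = (W * B - B * W) * X i + W * C := by
      have hprod : ((q ++ [i]).map X).prod = W * X i := by simp [W]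
      have hC : C = X i * B - B * X i := rfl
      rw [hprod, hC]
      noncomm_ring
    have hpass := ih s (i :: t) fun w hw => hg w (by simp at hw ⊢; omega)
    have habsorb := ih (i :: s) t fun w hw => hg w (by simp at hw ⊢; omega)
    have hfront : ‖C (W (Wt η))‖ ≤ (s.length + 1)! * g (q.length + t.length) := by
      refine (hb (i :: s) (List.cons_ne_nil _ _) _).trans ?_
      have h := hg (q ++ t) (by simp)
      rw [List.map_append, List.prod_append, List.length_append] at h
      exact mul_le_mul_of_nonneg_left h (by positivity)
    calc _ = ‖(W * B - B * W) (X i (Wt η)) + (C (W (Wt η)) + (W * C - C * W) (Wt η))‖ := by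
          rw [hsplit, LinearMap.add_apply, LinearMap.sub_apply (W * C)]
          exact congrArg _ (congrArg _ (add_sub_cancel _ _).symm)
      _ ≤ ‖(W * B - B * W) (X i (Wt η))‖ +
            (‖C (W (Wt η))‖ + ‖(W * C - C * W) (Wt η)‖) :=
          (norm_add_le _ _).trans (add_le_add le_rfl (norm_add_le _ _))
      _ ≤ _ := add_le_add hpass (add_le_add hfront habsorb)
      _ = _ := by
          rw [List.length_append, List.length_singleton, sum_range_succ_choose_succ_mul]
          simp only [List.length_cons, Nat.add_zero, Nat.zero_add]
          congr 1
          · exact sum_congr rfl fun j _ => by congr 3; omega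
          · congr 2
            · congr 1; omega
            · funext j
              rw [show s.length + 1 + j = s.length + (j + 1) by omega,
                show q.length + t.length - (j + 1) = q.length + 1 + t.length - (j + 1 + 1) by omega]

theorem norm_commutator_prod_apply_le
    (hb : ∀ l : List I, l ≠ [] → ∀ v : V,
      ‖nestedCommutator X A l v‖ ≤ l.length ! * ‖A v‖)
    {η : V} {m : ℕ} (u : List I)
    (hu : ∀ w : List I, w.length < u.length →
      ‖A ((w.map X).prod η)‖ ≤ (w.length + m + 1)! * 3 ^ w.length) :
    ‖((u.map X).prod * A - A * (u.map X).prod) η‖ ≤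
      ∑ j ∈ range u.length, ((u.length + m + 1)! : ℝ) * 3 ^ (u.length - (j + 1)) := by
  have h := norm_commutator_prod_nestedCommutator_apply_le hb u [] []
    (g := fun d => (d + m + 1)! * 3 ^ d) fun w hw => hu w (by simpa using hw)
  refine h.trans (sum_le_sum fun j hj => ?_)
  have hj : j + 1 ≤ u.length := mem_range.mp hj
  have hfact := Nat.choose_mul_factorial_mul_factorial_add_le hj (m + 1)
  rw [← add_assoc, ← add_assoc] at hfact
  simp only [List.length_nil, add_zero, zero_add]
  calc _ = ((u.length.choose (j + 1) * (j + 1)! * (u.length - (j + 1) + m + 1)! : ℕ) : ℝ) *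
        3 ^ (u.length - (j + 1)) := by
        push_cast; ring
    _ ≤ _ := by gcongr

theorem norm_apply_prod_apply_pow_le (ha : ∀ (i : I) (v : V), ‖X i v‖ ≤ ‖A v‖)
    (hb : ∀ l : List I, l ≠ [] → ∀ v : V,
      ‖nestedCommutator X A l v‖ ≤ l.length ! * ‖A v‖)
    {ξ : V} (hξ : ∀ m : ℕ, ‖(A ^ m) ξ‖ ≤ m !) (u : List I) (m : ℕ) :
    ‖A ((u.map X).prod ((A ^ m) ξ))‖ ≤ (u.length + m + 1)! * 3 ^ u.length := by
  induction hn : u.length using Nat.strong_induction_on generalizing u m with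
  | _ n ih =>
  cases u with
  | nil =>
    subst hn
    have h := hξ (m + 1)
    rw [pow_succ', Module.End.mul_apply] at h
    simpa using h
  | cons i v =>
    subst hn
    set N := v.length
    set η := (A ^ m) ξ
    set W := ((i :: v).map X).prod
    have hsplit : ‖A (W η)‖ ≤ ‖W (A η)‖ + ‖(W * A - A * W) η‖ := by
      have h : A (W η) = W (A η) - (W * A - A * W) η := by simp
      rw [h]
      exact norm_sub_le _ _
    have hshift : ‖W (A η)‖ ≤ (N + 1 + m + 1)! * 3 ^ N := by
      have h := ih N (by simp [N]) v (m + 1) rfl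
      rw [pow_succ', Module.End.mul_apply, show N + (m + 1) = N + 1 + m by omega] at h
      exact (ha i _).trans h
    have hcomm := norm_commutator_prod_apply_le hb (i :: v) fun w hw => ih w.length hw w m rfl
    simp only [List.length_cons, Nat.add_sub_add_right] at hcomm
    calc ‖A (W η)‖ ≤ (N + 1 + m + 1)! * 3 ^ N +
          ∑ j ∈ range (N + 1), ((N + 1 + m + 1)! : ℝ) * 3 ^ (N - j) :=
          hsplit.trans (add_le_add hshift hcomm)
      _ ≤ (N + 1 + m + 1)! * 3 ^ (N + 1) := by
        rw [← mul_sum, ← mul_add]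
        gcongr
        exact_mod_cast three_pow_add_sum_range_three_pow_sub_le N
      _ = ((i :: v).length + m + 1)! * 3 ^ (i :: v).length := rfl

end Domination

/-- Nelson's analytic domination theorem (Goodman's refinement): if each `X i` is dominated
by `A` and the iterated adjoint actions of the `X i` on `A` satisfy factorial bounds, then
there is `M > 0` such that `‖X_{i_n} ⋯ X_{i_1} ξ‖ ≤ n!·Mⁿ` for all vectors `ξ` with
`‖A^m ξ‖ ≤ m!` for all `m`. -/
theorem nelson_analytic_domination (𝕜 : Type*) [RCLike 𝕜] (V : Type*)
    [NormedAddCommGroup V] [NormedSpace 𝕜 V]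
    (I : Type*) (A : Module.End 𝕜 V) (X : I → Module.End 𝕜 V)
    (ha : ∀ (i : I) (ξ : V), ‖X i ξ‖ ≤ ‖A ξ‖)
    (hb : ∀ l : List I, l ≠ [] → ∀ ξ : V,
      ‖(l.foldr (fun i B => X i * B - B * X i) A) ξ‖ ≤
        (Nat.factorial l.length : ℝ) * ‖A ξ‖) :
    ∃ M : ℝ, 0 < M ∧ ∀ l : List I, l ≠ [] → ∀ ξ : V,
      (∀ m : ℕ, ‖(A ^ m) ξ‖ ≤ (Nat.factorial m : ℝ)) →
      ‖((l.map X).prod) ξ‖ ≤ (Nat.factorial l.length : ℝ) * M ^ l.length := by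
  refine ⟨3, by norm_num, fun l hl ξ hξ => ?_⟩
  obtain ⟨i, v, rfl⟩ := List.exists_cons_of_ne_nil hl
  calc ‖((i :: v).map X).prod ξ‖ ≤ ‖A ((v.map X).prod ((A ^ 0) ξ))‖ := by
        simpa using ha i ((v.map X).prod ξ)
    _ ≤ (v.length + 0 + 1)! * 3 ^ v.length := norm_apply_prod_apply_pow_le ha hb hξ v 0
    _ ≤ (i :: v).length ! * 3 ^ (i :: v).length := by
        rw [List.length_cons, Nat.add_zero]
        gcongr
        · norm_num
        · omega
end

section
/- Let α, β, γ be real numbers with α > −1, β > −1, γ > −1, 2α + γ > −2 and 2β + γ > −2. Then the function (t₁, t₂) ↦ t₁^α·(1−t₁)^β·t₂^α·(1−t₂)^β·|t₁ − t₂|^γ is Lebesgue integrable on the open square (0,1) × (0,1). -/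
/-!
Cover the open square by the corner squares `(0, 3/4)²` and `(1/4, 1)²` and the two
off-diagonal rectangles `(0, 1/3) × (2/3, 1)` and `(2/3, 1) × (0, 1/3)`.

On the rectangles `|t₁ - t₂| ^ γ` is bounded and the product of the one-variable weights
`t ^ α * (1 - t) ^ β` is integrable. On `(0, 3/4)²` the factors `(1 - tᵢ) ^ β` are bounded, so it
suffices that `x ^ α * y ^ α * |x - y| ^ γ` is integrable on `(0, 1)²`. By symmetry we may take
`y ≤ x`, and then the substitution `y = x u` turns the inner integral into
`x ^ (α + γ + 1) * B(α + 1, γ + 1)`, leaving `∫₀¹ x ^ (2α + γ + 1) dx < ∞`. The reflection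
`t ↦ 1 - t` exchanges `α` and `β` and carries `(1/4, 1)²` onto `(0, 3/4)²`.
-/

open MeasureTheory Set

theorem integrableOn_sub_rpow_mul_sub_rpow {a b p q : ℝ} (hab : a < b) (hp : -1 < p)
    (hq : -1 < q) : IntegrableOn (fun t => (t - a) ^ p * (b - t) ^ q) (Ioo a b) := by
  obtain ⟨m, ham, hmb⟩ := exists_between hab
  have hleft : IntegrableOn (fun t => (t - a) ^ p * (b - t) ^ q) (Ioc a m) := by
    have h : IntervalIntegrable (fun t => (t - a) ^ p) volume a m := by
      simpa using
        (intervalIntegral.intervalIntegrable_rpow' hp).comp_sub_right a (a := 0) (b := m - a)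
    refine ((intervalIntegrable_iff_integrableOn_Ioc_of_le ham.le).1 h).mul_continuousOn_of_subset
      (K := Icc a m) ?_ measurableSet_Ioc isCompact_Icc Ioc_subset_Icc_self
    exact ContinuousOn.rpow_const (by fun_prop) fun t ht => Or.inl (by linarith [ht.2])
  have hright : IntegrableOn (fun t => (t - a) ^ p * (b - t) ^ q) (Ioc m b) := by
    have h : IntervalIntegrable (fun t => (b - t) ^ q) volume m b := by
      simpa using
        ((intervalIntegral.intervalIntegrable_rpow' hq).comp_sub_left b (a := 0) (b := b - m)).symm
    refine ((intervalIntegrable_iff_integrableOn_Ioc_of_le hmb.le).1 h).continuousOn_mul_of_subset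
      (K := Icc m b) ?_ isCompact_Icc measurableSet_Ioc Ioc_subset_Icc_self
    exact ContinuousOn.rpow_const (by fun_prop) fun t ht => Or.inl (by linarith [ht.1])
  have := hleft.union hright
  rw [Ioc_union_Ioc_eq_Ioc ham.le hmb.le] at this
  exact this.mono_set Ioo_subset_Ioc_self

theorem intervalIntegral_rpow_mul_sub_rpow {x : ℝ} (hx : 0 < x) (p q : ℝ) :
    ∫ y in 0..x, y ^ p * (x - y) ^ q = x ^ (p + q + 1) * ∫ u in 0..1, u ^ p * (1 - u) ^ q := by
  have hscale : ∀ y ∈ uIcc 0 x,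
      y ^ p * (x - y) ^ q = x ^ (p + q) * ((y / x) ^ p * (1 - y / x) ^ q) := by
    intro y hy
    rw [uIcc_of_le hx.le] at hy
    rw [Real.div_rpow hy.1 hx.le, one_sub_div hx.ne', Real.div_rpow (by linarith [hy.2]) hx.le,
      Real.rpow_add hx]
    field_simp
  rw [intervalIntegral.integral_congr hscale, intervalIntegral.integral_const_mul,
    intervalIntegral.integral_comp_div (fun u => u ^ p * (1 - u) ^ q) hx.ne', zero_div,
    div_self hx.ne', smul_eq_mul, Real.rpow_add hx (p + q), Real.rpow_one]
  ring

section

variable {α β γ : ℝ}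

theorem integrableOn_Ioc_rpow_mul_rpow_mul_abs_sub_rpow (hα : -1 < α) (hγ : -1 < γ) {x : ℝ}
    (hx : 0 < x) : IntegrableOn (fun y => x ^ α * y ^ α * |x - y| ^ γ) (Ioc 0 x) := by
  have h : IntegrableOn (fun y => x ^ α * ((y - 0) ^ α * (x - y) ^ γ)) (Ioc 0 x) := by
    rw [integrableOn_Ioc_iff_integrableOn_Ioo]
    exact (integrableOn_sub_rpow_mul_sub_rpow hx hα hγ).const_mul _
  refine h.congr_fun (fun y hy => ?_) measurableSet_Ioc
  simp only [sub_zero, abs_of_nonneg (sub_nonneg.2 hy.2), mul_assoc]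

theorem integral_Ioc_rpow_mul_rpow_mul_abs_sub_rpow {x : ℝ} (hx : 0 < x) :
    ∫ y in Ioc 0 x, x ^ α * y ^ α * |x - y| ^ γ =
      (∫ u in (0 : ℝ)..1, u ^ α * (1 - u) ^ γ) * x ^ (2 * α + γ + 1) := by
  calc ∫ y in Ioc 0 x, x ^ α * y ^ α * |x - y| ^ γ
      = x ^ α * ∫ y in (0 : ℝ)..x, y ^ α * (x - y) ^ γ := by
        rw [intervalIntegral.integral_of_le hx.le, ← integral_const_mul]
        refine setIntegral_congr_fun measurableSet_Ioc fun y hy => ?_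
        simp only [abs_of_nonneg (sub_nonneg.2 hy.2), mul_assoc]
    _ = (∫ u in (0 : ℝ)..1, u ^ α * (1 - u) ^ γ) * x ^ (2 * α + γ + 1) := by
        rw [intervalIntegral_rpow_mul_sub_rpow hx, ← mul_assoc, ← Real.rpow_add hx, mul_comm]
        congr 2
        ring

theorem integrableOn_rpow_mul_rpow_mul_abs_sub_rpow_lowerTriangle (hα : -1 < α) (hγ : -1 < γ)
    (h : -2 < 2 * α + γ) :
    IntegrableOn (fun p : ℝ × ℝ => p.1 ^ α * p.2 ^ α * |p.1 - p.2| ^ γ)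
      {p | p.1 ∈ Ioo 0 1 ∧ p.2 ∈ Ioc 0 p.1} := by
  set T := {p : ℝ × ℝ | p.1 ∈ Ioo 0 1 ∧ p.2 ∈ Ioc 0 p.1}
  set G := fun p : ℝ × ℝ => p.1 ^ α * p.2 ^ α * |p.1 - p.2| ^ γ
  set B := ∫ u in (0 : ℝ)..1, u ^ α * (1 - u) ^ γ
  have hT : MeasurableSet T :=
    (measurableSet_Ioo.preimage measurable_fst).inter
      ((measurableSet_lt measurable_const measurable_snd).inter
        (measurableSet_le measurable_snd measurable_fst))
  have hslice : ∀ x ∈ Ioo (0 : ℝ) 1, ∀ y,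
      T.indicator G (x, y) = (Ioc 0 x).indicator (fun y => G (x, y)) y := by
    intro x hx y
    simp [T, indicator_apply, hx.1, hx.2]
  have hslice_of_notMem : ∀ x ∉ Ioo (0 : ℝ) 1, ∀ y, T.indicator G (x, y) = 0 :=
    fun x hx _ => indicator_of_notMem (fun hp => hx hp.1) _
  have hnorm : ∀ x ∈ Ioo (0 : ℝ) 1, ∫ y, ‖T.indicator G (x, y)‖ = B * x ^ (2 * α + γ + 1) := by
    intro x hx
    rw [← integral_Ioc_rpow_mul_rpow_mul_abs_sub_rpow hx.1]
    simp only [hslice x hx, norm_indicator_eq_indicator_norm, integral_indicator measurableSet_Ioc]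
    refine setIntegral_congr_fun measurableSet_Ioc fun y hy => Real.norm_of_nonneg ?_
    exact mul_nonneg (mul_nonneg (Real.rpow_nonneg hx.1.le _) (Real.rpow_nonneg hy.1.le _))
      (Real.rpow_nonneg (abs_nonneg _) _)
  rw [← integrable_indicator_iff hT, Measure.volume_eq_prod,
    integrable_prod_iff ((by fun_prop : Measurable G).indicator hT).aestronglyMeasurable]
  refine ⟨ae_of_all _ fun x => ?_, ?_⟩
  · by_cases hx : x ∈ Ioo 0 1
    · simpa [hslice x hx, integrable_indicator_iff measurableSet_Ioc]
        using integrableOn_Ioc_rpow_mul_rpow_mul_abs_sub_rpow hα hγ hx.1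
    · simp [hslice_of_notMem x hx]
  · have : IntegrableOn (fun x : ℝ => B * x ^ (2 * α + γ + 1)) (Ioo 0 1) :=
      ((intervalIntegral.integrableOn_Ioo_rpow_iff one_pos).2 (by linarith)).const_mul B
    refine ((integrable_indicator_iff measurableSet_Ioo).2 this).congr (ae_of_all _ fun x => ?_)
    by_cases hx : x ∈ Ioo 0 1
    · exact (indicator_of_mem hx _).trans (hnorm x hx).symm
    · simp [hx, hslice_of_notMem x hx]

theorem integrableOn_rpow_mul_rpow_mul_abs_sub_rpow (hα : -1 < α) (hγ : -1 < γ)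
    (h : -2 < 2 * α + γ) :
    IntegrableOn (fun p : ℝ × ℝ => p.1 ^ α * p.2 ^ α * |p.1 - p.2| ^ γ)
      (Ioo 0 1 ×ˢ Ioo 0 1) := by
  have hlower := integrableOn_rpow_mul_rpow_mul_abs_sub_rpow_lowerTriangle hα hγ h
  have hupper := (Measure.measurePreserving_swap.integrableOn_comp_preimage
    MeasurableEquiv.prodComm.measurableEmbedding).2 hlower
  have hsymm : ((fun p : ℝ × ℝ => p.1 ^ α * p.2 ^ α * |p.1 - p.2| ^ γ) ∘ Prod.swap) =
      fun p => p.1 ^ α * p.2 ^ α * |p.1 - p.2| ^ γ := by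
    ext p
    simp only [Function.comp, Prod.fst_swap, Prod.snd_swap, abs_sub_comm p.2]
    ring
  rw [hsymm] at hupper
  refine (hlower.union hupper).mono_set ?_
  rintro ⟨x, y⟩ ⟨hx, hy⟩
  rcases le_total y x with hyx | hxy
  · exact Or.inl ⟨hx, hy.1, hyx⟩
  · exact Or.inr ⟨hy, hx.1, hxy⟩

end

noncomputable def selbergIntegrand (α β γ : ℝ) (p : ℝ × ℝ) : ℝ :=
  p.1 ^ α * (1 - p.1) ^ β * p.2 ^ α * (1 - p.2) ^ β * |p.1 - p.2| ^ γ

theorem selbergIntegrand_swap (α β γ : ℝ) (p : ℝ × ℝ) :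
    selbergIntegrand α β γ p.swap = selbergIntegrand α β γ p := by
  simp only [selbergIntegrand, Prod.fst_swap, Prod.snd_swap, abs_sub_comm p.2]
  ring

theorem selbergIntegrand_one_sub (α β γ : ℝ) (p : ℝ × ℝ) :
    selbergIntegrand α β γ (Prod.map (1 - ·) (1 - ·) p) = selbergIntegrand β α γ p := by
  simp only [selbergIntegrand, Prod.map_fst, Prod.map_snd, sub_sub_cancel,
    sub_sub_sub_cancel_left, abs_sub_comm p.2]
  ring

section

variable {α β γ : ℝ}

theorem integrableOn_selbergIntegrand_Ioo_zero_prod_self (hα : -1 < α) (hγ : -1 < γ)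
    (h : -2 < 2 * α + γ) {c : ℝ} (hc : c < 1) :
    IntegrableOn (selbergIntegrand α β γ) (Ioo 0 c ×ˢ Ioo 0 c) := by
  have hsub : Ioo 0 c ⊆ Ioo (0 : ℝ) 1 := Ioo_subset_Ioo_right hc.le
  have hweight : ContinuousOn (fun p : ℝ × ℝ => (1 - p.1) ^ β * (1 - p.2) ^ β)
      (Icc 0 c ×ˢ Icc 0 c) :=
    ContinuousOn.mul
      (ContinuousOn.rpow_const (by fun_prop) fun p hp => Or.inl (by linarith [hp.1.2]))
      (ContinuousOn.rpow_const (by fun_prop) fun p hp => Or.inl (by linarith [hp.2.2]))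
  convert ((integrableOn_rpow_mul_rpow_mul_abs_sub_rpow hα hγ h).mono_set
    (prod_mono hsub hsub)).mul_continuousOn_of_subset hweight
    (measurableSet_Ioo.prod measurableSet_Ioo) (isCompact_Icc.prod isCompact_Icc)
    (prod_mono Ioo_subset_Icc_self Ioo_subset_Icc_self) using 1
  ext p
  simp only [selbergIntegrand]
  ring

theorem integrableOn_selbergIntegrand_Ioo_one_prod_self (hβ : -1 < β) (hγ : -1 < γ)
    (h : -2 < 2 * β + γ) {c : ℝ} (hc : 0 < c) :
    IntegrableOn (selbergIntegrand α β γ) (Ioo c 1 ×ˢ Ioo c 1) := by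
  have hreflect : MeasurePreserving (Prod.map (fun x : ℝ => 1 - x) (fun x : ℝ => 1 - x))
      (volume : Measure (ℝ × ℝ)) volume :=
    (Measure.measurePreserving_sub_left volume 1).prod
      (Measure.measurePreserving_sub_left volume 1)
  rw [← hreflect.integrableOn_comp_preimage
    ((measurableEmbedding_subLeft 1).prodMap (measurableEmbedding_subLeft 1)),
    preimage_prod_map_prod, preimage_const_sub_Ioo, sub_self]
  convert integrableOn_selbergIntegrand_Ioo_zero_prod_self (β := α) hβ hγ h (c := 1 - c)
    (by linarith) using 1
  ext p
  exact selbergIntegrand_one_sub α β γ p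

theorem integrableOn_selbergIntegrand_Ioo_zero_prod_Ioo_one (hα : -1 < α) (hβ : -1 < β)
    {a b : ℝ} (hab : a < b) :
    IntegrableOn (selbergIntegrand α β γ) (Ioo 0 a ×ˢ Ioo b 1) := by
  have hweight : IntegrableOn (fun t : ℝ => t ^ α * (1 - t) ^ β) (Ioo 0 1) := by
    simpa using integrableOn_sub_rpow_mul_sub_rpow zero_lt_one hα hβ
  have hprod : IntegrableOn
      (fun p : ℝ × ℝ => p.1 ^ α * (1 - p.1) ^ β * (p.2 ^ α * (1 - p.2) ^ β))
      (Ioo 0 1 ×ˢ Ioo 0 1) := by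
    rw [IntegrableOn, Measure.volume_eq_prod, ← Measure.prod_restrict]
    exact hweight.mul_prod hweight
  have hsub : Ioo 0 a ×ˢ Ioo b 1 ⊆ Ioo (0 : ℝ) 1 ×ˢ Ioo (0 : ℝ) 1 := by
    rintro p ⟨⟨hx0, hxa⟩, hby, hy1⟩
    exact ⟨⟨hx0, by linarith⟩, by linarith, hy1⟩
  have hdist : ContinuousOn (fun p : ℝ × ℝ => |p.1 - p.2| ^ γ) (Icc 0 a ×ˢ Icc b 1) :=
    ContinuousOn.rpow_const (by fun_prop) fun p hp =>
      Or.inl (abs_ne_zero.2 (sub_ne_zero.2 (by linarith [hp.1.2, hp.2.1])))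
  convert (hprod.mono_set hsub).mul_continuousOn_of_subset hdist
    (measurableSet_Ioo.prod measurableSet_Ioo) (isCompact_Icc.prod isCompact_Icc)
    (prod_mono Ioo_subset_Icc_self Ioo_subset_Icc_self) using 1
  ext p
  simp only [selbergIntegrand]
  ring

theorem integrableOn_selbergIntegrand_Ioo_one_prod_Ioo_zero (hα : -1 < α) (hβ : -1 < β)
    {a b : ℝ} (hab : a < b) :
    IntegrableOn (selbergIntegrand α β γ) (Ioo b 1 ×ˢ Ioo 0 a) := by
  have := (integrableOn_selbergIntegrand_Ioo_zero_prod_Ioo_one (γ := γ) hα hβ hab).swap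
  rwa [← Measure.volume_eq_prod, show selbergIntegrand α β γ ∘ Prod.swap = selbergIntegrand α β γ
    from funext (selbergIntegrand_swap α β γ)] at this

end

/-- Absolute convergence of Selberg's double integral `J₂(α, β; γ)` in the stated
parameter range. -/
theorem selberg_integrand_integrable (α β γ : ℝ)
    (hα : -1 < α) (hβ : -1 < β) (hγ : -1 < γ)
    (h₁ : -2 < 2 * α + γ) (h₂ : -2 < 2 * β + γ) :
    IntegrableOn
      (fun p : ℝ × ℝ =>
        p.1 ^ α * (1 - p.1) ^ β * p.2 ^ α * (1 - p.2) ^ β * |p.1 - p.2| ^ γ)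
      (Set.Ioo (0 : ℝ) 1 ×ˢ Set.Ioo (0 : ℝ) 1) := by
  have hcover : Ioo (0 : ℝ) 1 ×ˢ Ioo (0 : ℝ) 1 ⊆
      Ioo 0 (3 / 4) ×ˢ Ioo 0 (3 / 4) ∪ Ioo (1 / 4) 1 ×ˢ Ioo (1 / 4) 1 ∪
        Ioo 0 (1 / 3) ×ˢ Ioo (2 / 3) 1 ∪ Ioo (2 / 3) 1 ×ˢ Ioo 0 (1 / 3) := by
    rintro ⟨x, y⟩ ⟨⟨hx0, hx1⟩, hy0, hy1⟩
    simp only [mem_union, mem_prod, mem_Ioo]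
    grind
  have hzero := integrableOn_selbergIntegrand_Ioo_zero_prod_self (β := β) hα hγ h₁
    (c := 3 / 4) (by norm_num)
  have hone := integrableOn_selbergIntegrand_Ioo_one_prod_self (α := α) hβ hγ h₂
    (c := 1 / 4) (by norm_num)
  have hleft := integrableOn_selbergIntegrand_Ioo_zero_prod_Ioo_one (γ := γ) hα hβ
    (a := 1 / 3) (b := 2 / 3) (by norm_num)
  have hright := integrableOn_selbergIntegrand_Ioo_one_prod_Ioo_zero (γ := γ) hα hβ
    (a := 1 / 3) (b := 2 / 3) (by norm_num)
  exact (((hzero.union hone).union hleft).union hright).mono_set hcover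
end

section
/- Let a, b, c ∈ ℂ with Re(b) > −1 and Re(a + b + c) < −1. For z ∈ ℂ ∖ [1, ∞) define F(z) = ∫₁^∞ t^a·(t−1)^b·(t−z)^c dt, where t^a = exp(a·log t) and (t−1)^b = exp(b·log(t−1)) for real t > 1, and (t−z)^c = exp(c·Log(t−z)) with Log the principal branch of the logarithm (well-defined since t − z ∉ (−∞, 0] for t > 1 and z ∉ [1, ∞)). Then this integral converges absolutely for every z ∈ ℂ ∖ [1, ∞), F is holomorphic on ℂ ∖ [1, ∞), and F satisfies the hypergeometric differential equation z(z−1)·F″(z) − ((b+c)·z + (a+c)·(z−1))·F′(z) + c·(1 + a + b + c)·F(z) = 0 on ℂ ∖ [1, ∞). -/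
/-!
Differentiation under the integral sign gives `F' = -c ∫ t^a (t-1)^b (t-z)^(c-1)` and
`F'' = c (c-1) ∫ t^a (t-1)^b (t-z)^(c-2)`; it is justified because, for `z` near a point off the
cut, `|(t - z)^e| ≤ C t^(Re e)` uniformly in `z`, so all integrands are dominated by
`t^p (t-1)^(Re b)` with `p + Re b < -1`. Under the integral, the hypergeometric operator turns the
integrand into `c · d/dt [t^(a+1) (t-1)^(b+1) (t-z)^(c-1)]`, and this bracket vanishes at `t = 1`
(as `Re b > -1`) and at infinity (as `Re (a + b + c) < -1`).
-/

open MeasureTheory Set Complex Metric Filter Topology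

lemma rpow_le_max_mul_rpow {m M r t : ℝ} (p : ℝ) (hm : 0 < m) (ht : 0 < t)
    (hlow : m * t ≤ r) (hup : r ≤ M * t) : r ^ p ≤ max (m ^ p) (M ^ p) * t ^ p := by
  have hr : 0 < r := lt_of_lt_of_le (by positivity) hlow
  rcases le_or_gt 0 p with hp | hp
  · calc r ^ p ≤ (M * t) ^ p := Real.rpow_le_rpow hr.le hup hp
      _ = M ^ p * t ^ p := Real.mul_rpow (by nlinarith) ht.le
      _ ≤ _ := by gcongr; exact le_max_right _ _
  · calc r ^ p ≤ (m * t) ^ p := Real.rpow_le_rpow_of_nonpos (by positivity) hlow hp.le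
      _ = m ^ p * t ^ p := Real.mul_rpow hm.le ht.le
      _ ≤ _ := by gcongr; exact le_max_left _ _

lemma integrableOn_rpow_mul_sub_one_rpow {p q : ℝ} (hq : -1 < q) (hpq : p + q < -1) :
    IntegrableOn (fun t : ℝ => t ^ p * (t - 1) ^ q) (Ioi 1) := by
  have hcont : ContinuousOn (fun t : ℝ => t ^ p * (t - 1) ^ q) (Ioi 1) := by
    intro t (ht : 1 < t)
    exact ((continuousAt_id.rpow_const (Or.inl (by positivity))).mul
      ((continuousAt_id.sub continuousAt_const).rpow_const
        (Or.inl (by simp; linarith)))).continuousWithinAt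
  rw [← Ioc_union_Ioi_eq_Ioi one_le_two]
  refine IntegrableOn.union ?_ ?_
  · have hsing : IntegrableOn (fun t : ℝ => (t - 1) ^ q) (Ioc 1 2) := by
      simpa [one_add_one_eq_two] using
        ((intervalIntegral.intervalIntegrable_rpow' (a := 0) (b := 1) hq).comp_sub_right 1).1
    exact hsing.continuousOn_mul_of_subset
      (continuousOn_id.rpow_const fun t ht => Or.inl (zero_lt_one.trans_le ht.1).ne')
      isCompact_Icc measurableSet_Ioc Ioc_subset_Icc_self
  · have hdecay : ∀ t ∈ Ioi (2 : ℝ),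
        ‖t ^ p * (t - 1) ^ q‖ ≤ max ((1 / 2) ^ q) (1 ^ q) * t ^ (p + q) := by
      intro t (ht : 2 < t)
      have ht0 : 0 < t := by linarith
      have ht1 : 0 ≤ t - 1 := by linarith
      rw [Real.norm_of_nonneg (by positivity), Real.rpow_add ht0, mul_left_comm]
      gcongr
      exact rpow_le_max_mul_rpow q (by norm_num) ht0 (by linarith) (by linarith)
    refine ((integrableOn_Ioi_rpow_of_lt hpq two_pos).const_mul (max ((1 / 2) ^ q) (1 ^ q))).mono'
      ((hcont.mono (Ioi_subset_Ioi one_le_two)).aestronglyMeasurable measurableSet_Ioi) ?_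
    exact (ae_restrict_iff' measurableSet_Ioi).2 (Eventually.of_forall hdecay)

def cutFromOne : Set ℂ := {w : ℂ | w.im = 0 ∧ 1 ≤ w.re}

lemma isClosed_cutFromOne : IsClosed cutFromOne :=
  (isClosed_eq continuous_im continuous_const).inter (isClosed_le continuous_const continuous_re)

lemma ofReal_mem_cutFromOne {t : ℝ} (ht : 1 ≤ t) : (t : ℂ) ∈ cutFromOne := by
  simp [cutFromOne, ht]

lemma ofReal_sub_mem_slitPlane {z : ℂ} (hz : z ∉ cutFromOne) {t : ℝ} (ht : 1 ≤ t) :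
    (t : ℂ) - z ∈ slitPlane := by
  rw [mem_slitPlane_iff]
  by_cases him : z.im = 0
  · have : z.re < 1 := by simpa [cutFromOne, him] using hz
    left
    simp only [sub_re, ofReal_re]
    linarith
  · right
    simpa using him

lemma norm_ofReal_sub_comparable {z : ℂ} {δ R t : ℝ} (hδ : 0 < δ) (hz : ‖z‖ ≤ R) (ht : 1 ≤ t)
    (hd : δ ≤ ‖(t : ℂ) - z‖) :
    δ / (δ + R) * t ≤ ‖(t : ℂ) - z‖ ∧ ‖(t : ℂ) - z‖ ≤ (1 + R) * t := by
  have hR : 0 ≤ R := (norm_nonneg z).trans hz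
  have hnorm_t : ‖(t : ℂ)‖ = t := by simp [abs_of_pos (zero_lt_one.trans_le ht)]
  have hlow : t ≤ ‖(t : ℂ) - z‖ + R := by
    linarith [norm_sub_norm_le (t : ℂ) z]
  have hup : ‖(t : ℂ) - z‖ ≤ t + R := by
    linarith [norm_sub_le (t : ℂ) z]
  constructor
  · rw [div_mul_eq_mul_div, div_le_iff₀ (by positivity)]
    nlinarith
  · nlinarith

lemma norm_cpow_le_rpow_mul_exp (x e : ℂ) : ‖x ^ e‖ ≤ ‖x‖ ^ e.re * Real.exp (Real.pi * |e.im|) := by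
  have harg : -(arg x * e.im) ≤ Real.pi * |e.im| := by
    calc -(arg x * e.im) ≤ |arg x| * |e.im| := by rw [← abs_mul]; exact neg_le_abs _
      _ ≤ Real.pi * |e.im| := by gcongr; exact abs_arg_le_pi x
  calc ‖x ^ e‖ ≤ ‖x‖ ^ e.re / Real.exp (arg x * e.im) := norm_cpow_le x e
    _ = ‖x‖ ^ e.re * Real.exp (-(arg x * e.im)) := by rw [Real.exp_neg, div_eq_mul_inv]
    _ ≤ ‖x‖ ^ e.re * Real.exp (Real.pi * |e.im|) := by gcongr

lemma exists_mem_nhds_norm_sub_cpow_le {z₀ : ℂ} (hz₀ : z₀ ∉ cutFromOne) :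
    ∃ s ∈ 𝓝 z₀, s ⊆ cutFromOneᶜ ∧ ∀ e : ℂ, ∃ C, 0 ≤ C ∧ ∀ z ∈ s, ∀ t : ℝ, 1 ≤ t →
      ‖((t : ℂ) - z) ^ e‖ ≤ C * t ^ e.re := by
  have hd : 0 < infDist z₀ cutFromOne :=
    (isClosed_cutFromOne.notMem_iff_infDist_pos ⟨1, ofReal_mem_cutFromOne le_rfl⟩).1 hz₀
  set δ := infDist z₀ cutFromOne / 2 with hδ_def
  set R := ‖z₀‖ + δ
  have hδ : 0 < δ := half_pos hd
  have hnear : ∀ z ∈ ball z₀ δ, ‖z‖ ≤ R ∧ ∀ t : ℝ, 1 ≤ t → δ ≤ ‖(t : ℂ) - z‖ := by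
    intro z hz
    rw [mem_ball, dist_eq] at hz
    refine ⟨by linarith [norm_le_norm_add_norm_sub' z z₀], fun t ht => ?_⟩
    have h₁ := infDist_le_infDist_add_dist (x := z₀) (y := z) (s := cutFromOne)
    have h₂ := infDist_le_dist_of_mem (x := z) (ofReal_mem_cutFromOne ht)
    rw [dist_eq, norm_sub_rev] at h₁ h₂
    linarith [hδ_def]
  refine ⟨ball z₀ δ, ball_mem_nhds z₀ hδ, fun z hz hcut => ?_, fun e => ?_⟩
  · have := infDist_le_dist_of_mem (x := z₀) hcut
    rw [mem_ball, dist_comm] at hz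
    linarith [hδ_def]
  · refine ⟨Real.exp (Real.pi * |e.im|) * max ((δ / (δ + R)) ^ e.re) ((1 + R) ^ e.re),
      by positivity, fun z hz t ht => ?_⟩
    obtain ⟨hzR, hdist⟩ := hnear z hz
    obtain ⟨hlow, hup⟩ := norm_ofReal_sub_comparable hδ hzR ht (hdist t ht)
    calc ‖((t : ℂ) - z) ^ e‖ ≤ ‖(t : ℂ) - z‖ ^ e.re * Real.exp (Real.pi * |e.im|) :=
          norm_cpow_le_rpow_mul_exp _ _
      _ ≤ max ((δ / (δ + R)) ^ e.re) ((1 + R) ^ e.re) * t ^ e.re * Real.exp (Real.pi * |e.im|) := by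
          gcongr
          exact rpow_le_max_mul_rpow e.re (by positivity) (by linarith) hlow hup
      _ = _ := by ring

noncomputable def eulerKernel (a b c z : ℂ) (t : ℝ) : ℂ :=
  (t : ℂ) ^ a * ((t : ℂ) - 1) ^ b * ((t : ℂ) - z) ^ c

noncomputable def eulerIntegral (a b c z : ℂ) : ℂ := ∫ t in Ioi (1 : ℝ), eulerKernel a b c z t

section Kernel

variable {a b c z : ℂ}

lemma norm_eulerKernel {t : ℝ} (ht : 1 < t) :
    ‖eulerKernel a b c z t‖ = t ^ a.re * (t - 1) ^ b.re * ‖((t : ℂ) - z) ^ c‖ := by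
  rw [eulerKernel, norm_mul, norm_mul, norm_cpow_eq_rpow_re_of_pos (by linarith),
    ← ofReal_one, ← ofReal_sub, norm_cpow_eq_rpow_re_of_pos (by linarith)]

lemma norm_eulerKernel_le {C : ℝ} (hC : ∀ t : ℝ, 1 ≤ t → ‖((t : ℂ) - z) ^ c‖ ≤ C * t ^ c.re)
    {t : ℝ} (ht : 1 < t) :
    ‖eulerKernel a b c z t‖ ≤ C * (t ^ (a.re + c.re) * (t - 1) ^ b.re) := by
  have ht0 : 0 < t := by linarith
  have ht1 : 0 ≤ t - 1 := by linarith
  rw [norm_eulerKernel ht, Real.rpow_add ht0]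
  calc t ^ a.re * (t - 1) ^ b.re * ‖((t : ℂ) - z) ^ c‖
      ≤ t ^ a.re * (t - 1) ^ b.re * (C * t ^ c.re) := by gcongr; exact hC t ht.le
    _ = _ := by ring

lemma hasDerivAt_eulerKernel (hz : z ∉ cutFromOne) {t : ℝ} (ht : 1 < t) :
    HasDerivAt (eulerKernel a b c z)
      (a * eulerKernel (a - 1) b c z t + b * eulerKernel a (b - 1) c z t +
        c * eulerKernel a b (c - 1) z t) t := by
  have h₁ : HasDerivAt (fun s : ℝ => (s : ℂ) ^ a) (a * (t : ℂ) ^ (a - 1)) t := by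
    simpa using ((hasDerivAt_id (t : ℂ)).cpow_const
      (ofReal_mem_slitPlane.2 (by linarith))).comp_ofReal
  have h₂ : HasDerivAt (fun s : ℝ => ((s : ℂ) - 1) ^ b) (b * ((t : ℂ) - 1) ^ (b - 1)) t := by
    simpa using (((hasDerivAt_id (t : ℂ)).sub_const 1).cpow_const
      (Or.inl (by simp; linarith))).comp_ofReal
  have h₃ : HasDerivAt (fun s : ℝ => ((s : ℂ) - z) ^ c) (c * ((t : ℂ) - z) ^ (c - 1)) t := by
    simpa using (((hasDerivAt_id (t : ℂ)).sub_const z).cpow_const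
      (ofReal_sub_mem_slitPlane hz ht.le)).comp_ofReal
  exact ((h₁.fun_mul h₂).fun_mul h₃).congr_deriv (by simp only [eulerKernel]; ring)

lemma hasDerivAt_eulerKernel_param (hz : z ∉ cutFromOne) {t : ℝ} (ht : 1 ≤ t) :
    HasDerivAt (fun w => eulerKernel a b c w t) (-c * eulerKernel a b (c - 1) z t) z := by
  have h := (((hasDerivAt_id z).const_sub (t : ℂ)).cpow_const
    (c := c) (ofReal_sub_mem_slitPlane hz ht)).const_mul ((t : ℂ) ^ a * ((t : ℂ) - 1) ^ b)
  exact h.congr_deriv (by simp only [eulerKernel, id]; ring)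

lemma continuousOn_eulerKernel (hz : z ∉ cutFromOne) : ContinuousOn (eulerKernel a b c z) (Ioi 1) :=
  fun _ ht => (hasDerivAt_eulerKernel hz ht).continuousAt.continuousWithinAt

lemma integrableOn_eulerKernel (hb : -1 < b.re) (habc : a.re + b.re + c.re < -1)
    (hz : z ∉ cutFromOne) : IntegrableOn (eulerKernel a b c z) (Ioi 1) := by
  obtain ⟨s, hs, -, hbound⟩ := exists_mem_nhds_norm_sub_cpow_le hz
  obtain ⟨C, -, hC⟩ := hbound c
  have hmajorant : IntegrableOn (fun t : ℝ => t ^ (a.re + c.re) * (t - 1) ^ b.re) (Ioi 1) :=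
    integrableOn_rpow_mul_sub_one_rpow hb (by linarith)
  refine (hmajorant.const_mul C).mono'
    ((continuousOn_eulerKernel hz).aestronglyMeasurable measurableSet_Ioi) ?_
  exact (ae_restrict_iff' measurableSet_Ioi).2 (Eventually.of_forall fun t ht =>
    norm_eulerKernel_le (hC z (mem_of_mem_nhds hs)) ht)

lemma hasDerivAt_eulerIntegral (hb : -1 < b.re) (habc : a.re + b.re + c.re < -1)
    (hz : z ∉ cutFromOne) :
    HasDerivAt (eulerIntegral a b c) (-c * eulerIntegral a b (c - 1) z) z := by
  obtain ⟨s, hs, hs_cut, hbound⟩ := exists_mem_nhds_norm_sub_cpow_le hz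
  obtain ⟨C, -, hC⟩ := hbound (c - 1)
  have hmajorant : IntegrableOn (fun t : ℝ => t ^ (a.re + (c - 1).re) * (t - 1) ^ b.re) (Ioi 1) :=
    integrableOn_rpow_mul_sub_one_rpow hb (by simp; linarith)
  have key := hasDerivAt_integral_of_dominated_loc_of_deriv_le
    (F := fun w t => eulerKernel a b c w t) (F' := fun w t => -c * eulerKernel a b (c - 1) w t)
    (μ := volume.restrict (Ioi 1))
    (bound := fun t => ‖c‖ * (C * (t ^ (a.re + (c - 1).re) * (t - 1) ^ b.re)))
    hs ?_ (integrableOn_eulerKernel hb habc hz) ?_ ?_ ?_ ?_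
  · rw [eulerIntegral, ← integral_const_mul]
    exact key.2
  · filter_upwards [hs] with w hw
    exact (continuousOn_eulerKernel (hs_cut hw)).aestronglyMeasurable measurableSet_Ioi
  · exact ((continuousOn_eulerKernel hz).aestronglyMeasurable measurableSet_Ioi).const_mul _
  · refine (ae_restrict_iff' measurableSet_Ioi).2 (Eventually.of_forall fun t ht w hw => ?_)
    rw [norm_mul, norm_neg]
    gcongr
    exact norm_eulerKernel_le (hC w hw) ht
  · exact (hmajorant.const_mul C).const_mul _
  · exact (ae_restrict_iff' measurableSet_Ioi).2 (Eventually.of_forall fun t ht w hw =>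
      hasDerivAt_eulerKernel_param (hs_cut hw) (le_of_lt ht))

lemma deriv_eulerIntegral (hb : -1 < b.re) (habc : a.re + b.re + c.re < -1)
    (hz : z ∉ cutFromOne) : deriv (eulerIntegral a b c) z = -c * eulerIntegral a b (c - 1) z :=
  (hasDerivAt_eulerIntegral hb habc hz).deriv

lemma deriv_deriv_eulerIntegral (hb : -1 < b.re) (habc : a.re + b.re + c.re < -1)
    (hz : z ∉ cutFromOne) :
    deriv (deriv (eulerIntegral a b c)) z = c * (c - 1) * eulerIntegral a b (c - 2) z := by
  have habc' : a.re + b.re + (c - 1).re < -1 := by simp; linarith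
  have hderiv : deriv (eulerIntegral a b c) =ᶠ[𝓝 z] fun w => -c * eulerIntegral a b (c - 1) w := by
    filter_upwards [isClosed_cutFromOne.isOpen_compl.mem_nhds hz] with w hw
    exact deriv_eulerIntegral hb habc hw
  rw [hderiv.deriv_eq, ((hasDerivAt_eulerIntegral hb habc' hz).const_mul (-c)).deriv,
    sub_sub, one_add_one_eq_two]
  ring

lemma integral_deriv_eulerKernel_eq_zero (hb : 0 < b.re) (habc : a.re + b.re + c.re < 0)
    (hz : z ∉ cutFromOne) :
    ∫ t in Ioi (1 : ℝ), (a * eulerKernel (a - 1) b c z t + b * eulerKernel a (b - 1) c z t +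
      c * eulerKernel a b (c - 1) z t) = 0 := by
  have hcont : ContinuousWithinAt (eulerKernel a b c z) (Ici 1) 1 := by
    have h₁ : ContinuousAt (fun t : ℝ => (t : ℂ) ^ a) 1 :=
      continuous_ofReal.continuousAt.cpow continuousAt_const (by simp)
    have h₂ : ContinuousAt (fun t : ℝ => ((t : ℂ) - 1) ^ b) 1 := by
      have hpair : ContinuousAt (fun t : ℝ => ((t : ℂ) - 1, b)) 1 :=
        (continuous_ofReal.sub continuous_const).continuousAt.prodMk continuousAt_const
      refine ContinuousAt.comp (g := fun x : ℂ × ℂ => x.1 ^ x.2) ?_ hpair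
      simpa using continuousAt_cpow_zero_of_re_pos hb
    have h₃ : ContinuousAt (fun t : ℝ => ((t : ℂ) - z) ^ c) 1 :=
      (continuous_ofReal.continuousAt.sub continuousAt_const).cpow continuousAt_const
        (by simpa using ofReal_sub_mem_slitPlane hz le_rfl)
    exact ((h₁.mul h₂).mul h₃).continuousWithinAt
  have hint : IntegrableOn (fun t => a * eulerKernel (a - 1) b c z t +
      b * eulerKernel a (b - 1) c z t + c * eulerKernel a b (c - 1) z t) (Ioi 1) := by
    refine (((integrableOn_eulerKernel ?_ ?_ hz).const_mul a).add
      ((integrableOn_eulerKernel ?_ ?_ hz).const_mul b)).add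
      ((integrableOn_eulerKernel ?_ ?_ hz).const_mul c) <;>
      (try simp only [sub_re, one_re]) <;> linarith
  have hdecay : Tendsto (eulerKernel a b c z) atTop (𝓝 0) := by
    obtain ⟨s, hs, -, hbound⟩ := exists_mem_nhds_norm_sub_cpow_le hz
    obtain ⟨C, hC₀, hC⟩ := hbound c
    refine squeeze_zero_norm' (a := fun t : ℝ => C * t ^ (a.re + b.re + c.re)) ?_ ?_
    · filter_upwards [eventually_gt_atTop 1] with t ht
      calc ‖eulerKernel a b c z t‖ ≤ C * (t ^ (a.re + c.re) * (t - 1) ^ b.re) :=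
            norm_eulerKernel_le (hC z (mem_of_mem_nhds hs)) ht
        _ ≤ C * (t ^ (a.re + c.re) * t ^ b.re) := by
            gcongr
            linarith
        _ = C * t ^ (a.re + b.re + c.re) := by
            rw [← Real.rpow_add (by linarith)]; ring_nf
    · simpa using (tendsto_rpow_neg_atTop (neg_pos.2 habc)).const_mul C
  have hb₀ : b ≠ 0 := fun h => by simp [h] at hb
  rw [integral_Ioi_of_hasDerivAt_of_tendsto hcont (fun t ht => hasDerivAt_eulerKernel hz ht)
    hint hdecay]
  simp [eulerKernel, zero_cpow hb₀]

def hypergeometricOp (a b c z f f' f'' : ℂ) : ℂ :=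
  z * (z - 1) * f'' - ((b + c) * z + (a + c) * (z - 1)) * f' + c * (1 + a + b + c) * f

lemma integral_hypergeometricOp {α : Type*} [MeasurableSpace α] {μ : Measure α} {f f' f'' : α → ℂ}
    (hf : Integrable f μ) (hf' : Integrable f' μ) (hf'' : Integrable f'' μ) :
    ∫ x, hypergeometricOp a b c z (f x) (f' x) (f'' x) ∂μ =
      hypergeometricOp a b c z (∫ x, f x ∂μ) (∫ x, f' x ∂μ) (∫ x, f'' x ∂μ) := by
  simp only [hypergeometricOp]
  rw [integral_add (f := fun x => _ * f'' x - _ * f' x)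
      ((hf''.const_mul _).sub (hf'.const_mul _)) (hf.const_mul _),
    integral_sub (hf''.const_mul _) (hf'.const_mul _)]
  simp only [integral_const_mul]

/-- The right-hand side is `c` times the `t`-derivative of `eulerKernel (a + 1) (b + 1) (c - 1) z`
(see `hasDerivAt_eulerKernel`). -/
lemma hypergeometricOp_eulerKernel (hz : z ∉ cutFromOne) {t : ℝ} (ht : 1 < t) :
    hypergeometricOp a b c z (eulerKernel a b c z t) (-c * eulerKernel a b (c - 1) z t)
        (c * (c - 1) * eulerKernel a b (c - 2) z t) =
      c * ((a + 1) * eulerKernel a (b + 1) (c - 1) z t +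
        (b + 1) * eulerKernel (a + 1) b (c - 1) z t +
        (c - 1) * eulerKernel (a + 1) (b + 1) (c - 2) z t) := by
  have hpow {x : ℂ} (hx : x ≠ 0) (e : ℂ) : x ^ (e + 1) = x ^ e * x := by
    rw [cpow_add _ _ hx, cpow_one]
  have ht₀ : (t : ℂ) ≠ 0 := ofReal_ne_zero.2 (by linarith)
  have ht₁ : (t : ℂ) - 1 ≠ 0 := by
    rw [← ofReal_one, ← ofReal_sub, ofReal_ne_zero]; linarith
  have htz : (t : ℂ) - z ≠ 0 := slitPlane_ne_zero (ofReal_sub_mem_slitPlane hz ht.le)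
  have hc₁ : c - 1 = c - 2 + 1 := by ring
  have hc₀ : c = c - 2 + 1 + 1 := by ring
  simp only [hypergeometricOp, eulerKernel]
  rw [hpow ht₀, hpow ht₁, hc₁, hpow htz]
  conv_lhs => rw [hc₀, hpow htz, hpow htz]
  ring_nf

lemma hypergeometricOp_eulerIntegral (hb : -1 < b.re) (habc : a.re + b.re + c.re < -1)
    (hz : z ∉ cutFromOne) :
    hypergeometricOp a b c z (eulerIntegral a b c z) (-c * eulerIntegral a b (c - 1) z)
      (c * (c - 1) * eulerIntegral a b (c - 2) z) = 0 := by
  have hboundary := integral_deriv_eulerKernel_eq_zero (a := a + 1) (b := b + 1) (c := c - 1)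
    (by simp; linarith) (by simp; linarith) hz
  simp only [add_sub_cancel_right, sub_sub, one_add_one_eq_two] at hboundary
  rw [eulerIntegral, eulerIntegral, eulerIntegral, ← integral_const_mul, ← integral_const_mul,
    ← integral_hypergeometricOp (integrableOn_eulerKernel hb habc hz)
      ((integrableOn_eulerKernel hb (by simp; linarith) hz).const_mul _)
      ((integrableOn_eulerKernel hb (by simp; linarith) hz).const_mul _),
    setIntegral_congr_fun measurableSet_Ioi fun t ht => hypergeometricOp_eulerKernel hz ht,
    integral_const_mul, hboundary, mul_zero]

end Kernel

/-- The Euler integral `F(z) = ∫₁^∞ t^a (t−1)^b (t−z)^c dt` converges absolutely for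
`z ∉ [1, ∞)`, is holomorphic there and satisfies the hypergeometric differential
equation. -/
theorem euler_integral_hypergeometric (a b c : ℂ)
    (hb : -1 < b.re) (habc : (a + b + c).re < -1)
    (F : ℂ → ℂ)
    (hF : ∀ z : ℂ, F z =
      ∫ t in Set.Ioi (1 : ℝ), (t : ℂ) ^ a * ((t : ℂ) - 1) ^ b * ((t : ℂ) - z) ^ c) :
    (∀ z ∉ {w : ℂ | w.im = 0 ∧ 1 ≤ w.re},
      IntegrableOn (fun t : ℝ => (t : ℂ) ^ a * ((t : ℂ) - 1) ^ b * ((t : ℂ) - z) ^ c)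
        (Set.Ioi (1 : ℝ))) ∧
    DifferentiableOn ℂ F {w : ℂ | w.im = 0 ∧ 1 ≤ w.re}ᶜ ∧
    (∀ z ∉ {w : ℂ | w.im = 0 ∧ 1 ≤ w.re},
      z * (z - 1) * deriv (deriv F) z - ((b + c) * z + (a + c) * (z - 1)) * deriv F z +
        c * (1 + a + b + c) * F z = 0) := by
  obtain rfl : F = eulerIntegral a b c := funext hF
  have habc' : a.re + b.re + c.re < -1 := by simpa using habc
  refine ⟨fun z hz => integrableOn_eulerKernel hb habc' hz,
    fun z hz => (hasDerivAt_eulerIntegral hb habc' hz).differentiableAt.differentiableWithinAt,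
    fun z hz => ?_⟩
  rw [deriv_deriv_eulerIntegral hb habc' hz, deriv_eulerIntegral hb habc' hz]
  exact hypergeometricOp_eulerIntegral hb habc' hz
end

section
/- Let q, r ∈ ℂ with q ≠ 0, r ≠ 0 and q² ≠ 1; set s = q − q⁻¹ and z = 1 + (r − r⁻¹)/s. Define the 3×3 complex matrices g₁ = [[0, 1, 0], [1, s, 0], [0, −r⁻¹s, r⁻¹]], g₂ = [[r⁻¹, 0, −s], [0, 0, 1], [0, 1, s]], c₁ = [[0, 0, 0], [0, 0, 0], [1, r⁻¹, z]], c₂ = [[z, r, 1], [0, 0, 0], [0, 0, 0]]. Then: (i) g₁g₂g₁ = g₂g₁g₂; (ii) gᵢ² = 1 + s·gᵢ − r⁻¹s·cᵢ for i = 1, 2; (iii) cᵢ² = z·cᵢ for i = 1, 2, c₁c₂c₁ = c₁ and c₂c₁c₂ = c₂. Consequently, if in addition z ≠ 0, the matrices eᵢ = z⁻¹·cᵢ are idempotents satisfying the Jones relations e₁e₂e₁ = z⁻²·e₁ and e₂e₁e₂ = z⁻²·e₂. -/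
/-!
The braid relation and the relations among `c₁`, `c₂` are polynomial identities in `r`, `s`,
`t = r⁻¹` and `z`, valid over any commutative ring. The quadratic relations for `g₁`, `g₂` need in
addition `r * t = 1` and the defining relation of the loop value, `s * z = s + r - r⁻¹`. The
Jones relations for `eᵢ = z⁻¹ • cᵢ` then follow from `cᵢ² = z • cᵢ` and `cᵢ cⱼ cᵢ = cᵢ` in any
algebra.
-/

section JonesRelations

variable {K A : Type*} [Field K] [Semiring A] [Algebra K A]

theorem isIdempotentElem_inv_smul_of_sq_eq_smul {z : K} {c : A} (hz : z ≠ 0)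
    (hc : c ^ 2 = z • c) : IsIdempotentElem (z⁻¹ • c) := by
  rw [IsIdempotentElem, smul_mul_smul_comm, ← sq c, hc, smul_smul, mul_assoc,
    inv_mul_cancel₀ hz, mul_one]

theorem inv_smul_mul_inv_smul_mul_inv_smul {z : K} {c d : A} (h : c * d * c = c) :
    z⁻¹ • c * z⁻¹ • d * z⁻¹ • c = (z ^ 2)⁻¹ • z⁻¹ • c := by
  rw [smul_mul_smul_comm, smul_mul_smul_comm, h, smul_smul, sq, mul_inv]

end JonesRelations

theorem sub_inv_ne_zero_of_sq_ne_one {K : Type*} [Field K] {q : K} (hq : q ≠ 0)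
    (hq2 : q ^ 2 ≠ 1) : q - q⁻¹ ≠ 0 := by
  rw [sub_ne_zero]
  intro h
  apply hq2
  rw [sq, ← mul_inv_cancel₀ hq, ← h]

namespace BraidingMatrix

variable {K : Type*} [CommRing K] (r s t z : K)

-- `t` plays the role of `r⁻¹`.

def g₁ : Matrix (Fin 3) (Fin 3) K := !![0, 1, 0; 1, s, 0; 0, -(t * s), t]

def g₂ : Matrix (Fin 3) (Fin 3) K := !![t, 0, -s; 0, 0, 1; 0, 1, s]

def c₁ : Matrix (Fin 3) (Fin 3) K := !![0, 0, 0; 0, 0, 0; 1, t, z]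

def c₂ : Matrix (Fin 3) (Fin 3) K := !![z, r, 1; 0, 0, 0; 0, 0, 0]

theorem g₁_mul_g₂_mul_g₁ : g₁ s t * g₂ s t * g₁ s t = g₂ s t * g₁ s t * g₂ s t := by
  ext i j
  fin_cases i <;> fin_cases j <;> simp [g₁, g₂, Matrix.mul_apply, Fin.sum_univ_three] <;> ring

variable {r s t z}

theorem g₁_sq (hrt : r * t = 1) (hz : s * z = s + r - t) :
    g₁ s t ^ 2 = 1 + s • g₁ s t - (t * s) • c₁ t z := by
  ext i j
  fin_cases i <;> fin_cases j <;>
    simp [sq, g₁, c₁, Matrix.mul_apply, Fin.sum_univ_three] <;> grind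

theorem g₂_sq (hrt : r * t = 1) (hz : s * z = s + r - t) :
    g₂ s t ^ 2 = 1 + s • g₂ s t - (t * s) • c₂ r z := by
  ext i j
  fin_cases i <;> fin_cases j <;>
    simp [sq, g₂, c₂, Matrix.mul_apply, Fin.sum_univ_three] <;> grind

variable (r s t z)

theorem c₁_sq : c₁ t z ^ 2 = z • c₁ t z := by
  ext i j
  fin_cases i <;> fin_cases j <;> simp [sq, c₁, Matrix.mul_apply, Fin.sum_univ_three]

theorem c₂_sq : c₂ r z ^ 2 = z • c₂ r z := by
  ext i j
  fin_cases i <;> fin_cases j <;> simp [sq, c₂, Matrix.mul_apply, Fin.sum_univ_three]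

theorem c₁_mul_c₂_mul_c₁ : c₁ t z * c₂ r z * c₁ t z = c₁ t z := by
  ext i j
  fin_cases i <;> fin_cases j <;> simp [c₁, c₂, Matrix.mul_apply, Fin.sum_univ_three]

theorem c₂_mul_c₁_mul_c₂ : c₂ r z * c₁ t z * c₂ r z = c₂ r z := by
  ext i j
  fin_cases i <;> fin_cases j <;> simp [c₁, c₂, Matrix.mul_apply, Fin.sum_univ_three]

end BraidingMatrix

/-- The explicit `3×3` matrix realization of the braiding operators and Jones projections:
braid relation, cubic relation, and the Jones relations with constant `τ = z⁻²`. -/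
theorem braiding_and_jones_matrices (q r : ℂ) (hq : q ≠ 0) (hr : r ≠ 0) (hq2 : q ^ 2 ≠ 1)
    (s z : ℂ) (hs : s = q - q⁻¹) (hz : z = 1 + (r - r⁻¹) / s)
    (g₁ g₂ c₁ c₂ : Matrix (Fin 3) (Fin 3) ℂ)
    (hg₁ : g₁ = !![0, 1, 0; 1, s, 0; 0, -(r⁻¹ * s), r⁻¹])
    (hg₂ : g₂ = !![r⁻¹, 0, -s; 0, 0, 1; 0, 1, s])
    (hc₁ : c₁ = !![0, 0, 0; 0, 0, 0; 1, r⁻¹, z])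
    (hc₂ : c₂ = !![z, r, 1; 0, 0, 0; 0, 0, 0]) :
    g₁ * g₂ * g₁ = g₂ * g₁ * g₂ ∧
    g₁ ^ 2 = 1 + s • g₁ - (r⁻¹ * s) • c₁ ∧
    g₂ ^ 2 = 1 + s • g₂ - (r⁻¹ * s) • c₂ ∧
    c₁ ^ 2 = z • c₁ ∧ c₂ ^ 2 = z • c₂ ∧
    c₁ * c₂ * c₁ = c₁ ∧ c₂ * c₁ * c₂ = c₂ ∧
    (z ≠ 0 →
      (z⁻¹ • c₁) * (z⁻¹ • c₁) = z⁻¹ • c₁ ∧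
      (z⁻¹ • c₂) * (z⁻¹ • c₂) = z⁻¹ • c₂ ∧
      (z⁻¹ • c₁) * (z⁻¹ • c₂) * (z⁻¹ • c₁) = (z ^ 2)⁻¹ • (z⁻¹ • c₁) ∧
      (z⁻¹ • c₂) * (z⁻¹ • c₁) * (z⁻¹ • c₂) = (z ^ 2)⁻¹ • (z⁻¹ • c₂)) := by
  subst hs hz hg₁ hg₂ hc₁ hc₂
  have hs0 : q - q⁻¹ ≠ 0 := sub_inv_ne_zero_of_sq_ne_one hq hq2
  have hrt : r * r⁻¹ = 1 := mul_inv_cancel₀ hr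
  have hsz : (q - q⁻¹) * (1 + (r - r⁻¹) / (q - q⁻¹)) = q - q⁻¹ + r - r⁻¹ := by
    field_simp
    ring
  open BraidingMatrix in
  exact ⟨g₁_mul_g₂_mul_g₁ _ _, g₁_sq hrt hsz, g₂_sq hrt hsz, c₁_sq _ _, c₂_sq _ _,
    c₁_mul_c₂_mul_c₁ _ _ _, c₂_mul_c₁_mul_c₂ _ _ _, fun hz0 =>
    ⟨isIdempotentElem_inv_smul_of_sq_eq_smul hz0 (c₁_sq _ _),
      isIdempotentElem_inv_smul_of_sq_eq_smul hz0 (c₂_sq _ _),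
      inv_smul_mul_inv_smul_mul_inv_smul (c₁_mul_c₂_mul_c₁ _ _ _),
      inv_smul_mul_inv_smul_mul_inv_smul (c₂_mul_c₁_mul_c₂ _ _ _)⟩⟩
end

section
/- Let Γ be a free abelian group of finite rank and A an abelian group (written multiplicatively), and call a map ε : Γ × Γ → A a 2-cocycle if ε(λ, μ)·ε(λ+μ, ρ) = ε(μ, ρ)·ε(λ, μ+ρ) for all λ, μ, ρ ∈ Γ. For a 2-cocycle ε define its commutator map ω_ε(λ, μ) := ε(λ, μ)·ε(μ, λ)⁻¹. Then: (i) two 2-cocycles ε, ε′ are cohomologous, i.e. ε′(λ, μ) = ε(λ, μ)·a(λ)·a(μ)·a(λ+μ)⁻¹ for some function a : Γ → A, if and only if ω_ε = ω_{ε′}; (ii) for every biadditive map ω : Γ × Γ → A with ω(λ, λ) = 1 for all λ ∈ Γ, there exists a 2-cocycle ε with ω_ε = ω, and ε may moreover be chosen normalized so that ε(λ, 0) = 1, ε(0, λ) = 1 and ε(λ, −λ) = 1 for all λ ∈ Γ. -/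
/-- A (multiplicative) 2-cocycle on an additive abelian group `Γ` with values in a
commutative group `A` (with trivial action). -/
def IsMulCocycle2 {Γ A : Type*} [AddCommGroup Γ] [CommGroup A] (ε : Γ → Γ → A) : Prop :=
  ∀ l m r : Γ, ε l m * ε (l + m) r = ε m r * ε l (m + r)

/-!
A cocycle multiplied by a coboundary keeps its commutator map, because coboundaries are symmetric.
Conversely, if `ε` and `ε'` have the same commutator map then `ε' / ε` is a symmetric cocycle, so
it defines an abelian extension of `Γ` by `A`; since `Γ` is free this extension splits, and a
splitting exhibits `ε' / ε` as a coboundary.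

For existence, well-order a basis `(bᵢ)` of `Γ` and let `ε` be the biadditive map equal to
`ω(bᵢ, bⱼ)` for `i < j` and trivial otherwise; as `ω` is alternating, `ε(λ, μ) ε(μ, λ)⁻¹ = ω(λ, μ)`.
Biadditive maps are cocycles, and multiplying `ε` by the coboundary of a function `a` with
`a(λ) a(-λ) = ε(λ, λ)` makes `ε(λ, -λ) = 1`.
-/

theorem LinearMap.IsAlt.exists_sub_flip_eq {R M N : Type*} [CommSemiring R] [AddCommMonoid M]
    [Module R M] [AddCommGroup N] [Module R N] [Module.Free R M] {ω : M →ₗ[R] M →ₗ[R] N}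
    (hω : ω.IsAlt) : ∃ B : M →ₗ[R] M →ₗ[R] N, B - B.flip = ω := by
  classical
  let b := Module.Free.chooseBasis R M
  let r := @WellOrderingRel (Module.Free.ChooseBasisIndex R M)
  refine ⟨b.constr R fun i => b.constr R fun j => if r i j then ω (b i) (b j) else 0,
    LinearMap.ext_basis b b fun i j => ?_⟩
  simp only [LinearMap.sub_apply, LinearMap.flip_apply, Module.Basis.constr_basis]
  rcases trichotomous_of r i j with hij | rfl | hji
  · simp [hij, asymm hij]
  · simp [irrefl, hω.self_eq_zero]
  · simp [hji, asymm hji, hω.neg]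

section

variable {Γ A : Type*} [CommGroup A]

def commutatorMap (ε : Γ → Γ → A) : Γ → Γ → A :=
  fun l m => ε l m * (ε m l)⁻¹

lemma div_apply_comm_of_commutatorMap_eq {ε ε' : Γ → Γ → A}
    (h : ∀ l m, commutatorMap ε l m = commutatorMap ε' l m) (l m : Γ) :
    (ε' / ε) l m = (ε' / ε) m l := by
  have h' := (h l m).symm
  simp only [commutatorMap, ← div_eq_mul_inv] at h'
  exact div_eq_div_iff_div_eq_div.mp h'

variable [AddCommGroup Γ]

def mulCoboundary (ε : Γ → Γ → A) (a : Γ → A) : Γ → Γ → A :=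
  fun l m => ε l m * a l * a m * (a (l + m))⁻¹

lemma commutatorMap_mulCoboundary (ε : Γ → Γ → A) (a : Γ → A) :
    commutatorMap (mulCoboundary ε a) = commutatorMap ε := by
  ext l m
  simp only [commutatorMap, mulCoboundary, add_comm m l]
  apply Additive.ofMul.injective
  simp only [ofMul_mul, ofMul_inv]
  abel

lemma exists_mul_apply_neg_eq (g : Γ → A) (hg : ∀ l, g (-l) = g l)
    (hg' : ∀ l, -l = l → g l = 1) : ∃ a : Γ → A, a 0 = 1 ∧ ∀ l, a l * a (-l) = g l := by
  classical
  -- `a` is `g` on the smaller element of each pair `{l, -l}` in a well-ordering, and `1` elsewhere.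
  refine ⟨fun l => if WellOrderingRel l (-l) then g l else 1, by simp [irrefl], fun l => ?_⟩
  rcases trichotomous_of WellOrderingRel l (-l) with h | h | h
  · simp [h, asymm h]
  · simp [← h, irrefl, hg' l h.symm]
  · simp [h, asymm h, hg]

namespace IsMulCocycle2

variable {ε ε' : Γ → Γ → A}

lemma apply_zero_right (h : IsMulCocycle2 ε) (l : Γ) : ε l 0 = ε 0 0 := by
  simpa using h l 0 0

lemma apply_zero_left (h : IsMulCocycle2 ε) (r : Γ) : ε 0 r = ε 0 0 := by
  simpa using (h 0 0 r).symm

lemma div (h' : IsMulCocycle2 ε') (h : IsMulCocycle2 ε) : IsMulCocycle2 (ε' / ε) := by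
  intro l m r
  simp only [Pi.div_apply, div_mul_div_comm, h' l m r, h l m r]

lemma mulCoboundary (h : IsMulCocycle2 ε) (a : Γ → A) : IsMulCocycle2 (mulCoboundary ε a) := by
  intro l m r
  have hε : ε l (m + r) = ε l m * ε (l + m) r * (ε m r)⁻¹ :=
    eq_mul_inv_of_mul_eq (by rw [mul_comm, h])
  simp only [_root_.mulCoboundary, hε, ← add_assoc]
  apply Additive.ofMul.injective
  simp only [ofMul_mul, ofMul_inv]
  abel

lemma of_biadditive (h1 : ∀ l l' m, ε (l + l') m = ε l m * ε l' m)
    (h2 : ∀ l m m', ε l (m + m') = ε l m * ε l m') : IsMulCocycle2 ε := by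
  intro l m r
  rw [h1, h2]
  ac_rfl

@[reducible]
def extensionCommGroup (h : IsMulCocycle2 ε) (hs : ∀ l m, ε l m = ε m l) :
    CommGroup (A × Γ) where
  mul p q := (p.1 * q.1 * ε p.2 q.2, p.2 + q.2)
  one := ((ε 0 0)⁻¹, 0)
  inv p := (p.1⁻¹ * (ε 0 0)⁻¹ * (ε p.2 (-p.2))⁻¹, -p.2)
  mul_assoc p q r := by
    refine Prod.ext ?_ (add_assoc _ _ _)
    change p.1 * q.1 * ε p.2 q.2 * r.1 * ε (p.2 + q.2) r.2
      = p.1 * (q.1 * r.1 * ε q.2 r.2) * ε p.2 (q.2 + r.2)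
    calc p.1 * q.1 * ε p.2 q.2 * r.1 * ε (p.2 + q.2) r.2
        = p.1 * q.1 * r.1 * (ε p.2 q.2 * ε (p.2 + q.2) r.2) := by ac_rfl
      _ = p.1 * q.1 * r.1 * (ε q.2 r.2 * ε p.2 (q.2 + r.2)) := by rw [h]
      _ = p.1 * (q.1 * r.1 * ε q.2 r.2) * ε p.2 (q.2 + r.2) := by ac_rfl
  one_mul p := by
    refine Prod.ext ?_ (zero_add _)
    change (ε 0 0)⁻¹ * p.1 * ε 0 p.2 = p.1
    rw [h.apply_zero_left p.2, mul_right_comm, inv_mul_cancel, one_mul]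
  mul_one p := by
    refine Prod.ext ?_ (add_zero _)
    change p.1 * (ε 0 0)⁻¹ * ε p.2 0 = p.1
    rw [h.apply_zero_right p.2, mul_assoc, inv_mul_cancel, mul_one]
  inv_mul_cancel p := by
    refine Prod.ext ?_ (neg_add_cancel _)
    change p.1⁻¹ * (ε 0 0)⁻¹ * (ε p.2 (-p.2))⁻¹ * p.1 * ε (-p.2) p.2 = (ε 0 0)⁻¹
    rw [hs (-p.2)]
    apply Additive.ofMul.injective
    simp only [ofMul_mul, ofMul_inv]
    abel
  mul_comm p q := by
    refine Prod.ext ?_ (add_comm _ _)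
    change p.1 * q.1 * ε p.2 q.2 = q.1 * p.1 * ε q.2 p.2
    rw [hs, mul_comm p.1]

lemma exists_eq_coboundary_of_symm [Module.Projective ℤ Γ] (h : IsMulCocycle2 ε)
    (hs : ∀ l m, ε l m = ε m l) : ∃ a : Γ → A, ∀ l m, ε l m = a l * a m * (a (l + m))⁻¹ := by
  let _ := h.extensionCommGroup hs
  let π : Additive (A × Γ) →ₗ[ℤ] Γ :=
    (AddMonoidHom.mk' (fun p => p.toMul.2) fun _ _ => rfl).toIntLinearMap
  obtain ⟨s, hπs⟩ := Module.projective_lifting_property π LinearMap.id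
    fun l => ⟨Additive.ofMul (1, l), rfl⟩
  have hs₂ (l : Γ) : (s l).toMul.2 = l := LinearMap.congr_fun hπs l
  refine ⟨fun l => (s l).toMul.1⁻¹, fun l m => ?_⟩
  have hs₁ : (s (l + m)).toMul.1
      = (s l).toMul.1 * (s m).toMul.1 * ε (s l).toMul.2 (s m).toMul.2 :=
    congrArg (fun p => p.toMul.1) (map_add s l m)
  rw [hs₂, hs₂] at hs₁
  rw [inv_inv, hs₁]
  apply Additive.ofMul.injective
  simp only [ofMul_mul, ofMul_inv]
  abel

end IsMulCocycle2

def toAdditiveBilin (ω : Γ → Γ → A) (h1 : ∀ l l' m, ω (l + l') m = ω l m * ω l' m)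
    (h2 : ∀ l m m', ω l (m + m') = ω l m * ω l m') : Γ →ₗ[ℤ] Γ →ₗ[ℤ] Additive A :=
  (AddMonoidHom.mk' (fun l => (AddMonoidHom.mk' (fun m => Additive.ofMul (ω l m)) (h2 l)).toIntLinearMap)
    fun l l' => LinearMap.ext (h1 l l')).toIntLinearMap

lemma toAdditiveBilin_apply (ω : Γ → Γ → A) (h1 : ∀ l l' m, ω (l + l') m = ω l m * ω l' m)
    (h2 : ∀ l m m', ω l (m + m') = ω l m * ω l m') (l m : Γ) :
    toAdditiveBilin ω h1 h2 l m = Additive.ofMul (ω l m) :=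
  rfl

lemma exists_biadditive_commutatorMap_eq [Module.Free ℤ Γ] (ω : Γ → Γ → A)
    (h1 : ∀ l l' m, ω (l + l') m = ω l m * ω l' m) (h2 : ∀ l m m', ω l (m + m') = ω l m * ω l m')
    (h3 : ∀ l, ω l l = 1) :
    ∃ ε : Γ → Γ → A, (∀ l l' m, ε (l + l') m = ε l m * ε l' m) ∧
      (∀ l m m', ε l (m + m') = ε l m * ε l m') ∧ commutatorMap ε = ω := by
  obtain ⟨B, hB⟩ := LinearMap.IsAlt.exists_sub_flip_eq (ω := toAdditiveBilin ω h1 h2) h3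
  refine ⟨fun l m => (B l m).toMul, fun l l' m => by simp, fun l m m' => by simp, ?_⟩
  ext l m
  simpa [commutatorMap, div_eq_mul_inv, toAdditiveBilin_apply] using
    congrArg Additive.toMul (LinearMap.congr_fun₂ hB l m)

lemma exists_normalized_mulCoboundary_of_biadditive [IsAddTorsionFree Γ] {ε : Γ → Γ → A}
    (h1 : ∀ l l' m, ε (l + l') m = ε l m * ε l' m) (h2 : ∀ l m m', ε l (m + m') = ε l m * ε l m') :
    ∃ a : Γ → A, ∀ l, mulCoboundary ε a l 0 = 1 ∧ mulCoboundary ε a 0 l = 1 ∧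
      mulCoboundary ε a l (-l) = 1 := by
  set B := toAdditiveBilin ε h1 h2
  have hε (l m : Γ) : ε l m = (B l m).toMul := rfl
  have hneg (l : Γ) : ε l (-l) = (ε l l)⁻¹ := by simp [hε]
  obtain ⟨a, ha0, ha⟩ := exists_mul_apply_neg_eq (fun l => ε l l) (by simp [hε])
    (fun l hl => by simp [hε, neg_eq_self.mp hl])
  refine ⟨a, fun l => ⟨by simp [mulCoboundary, ha0, hε], by simp [mulCoboundary, ha0, hε], ?_⟩⟩
  rw [mulCoboundary, add_neg_cancel, ha0, inv_one, mul_one, mul_assoc, ha, hneg, inv_mul_cancel]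

end

theorem cocycles_on_free_abelian_general (Γ : Type*) [AddCommGroup Γ]
    [Module.Free ℤ Γ]
    (A : Type*) [CommGroup A] :
    (∀ ε ε' : Γ → Γ → A, IsMulCocycle2 ε → IsMulCocycle2 ε' →
      ((∃ a : Γ → A, ∀ l m : Γ, ε' l m = ε l m * a l * a m * (a (l + m))⁻¹) ↔
        (∀ l m : Γ, ε l m * (ε m l)⁻¹ = ε' l m * (ε' m l)⁻¹))) ∧
    (∀ ω : Γ → Γ → A,
      (∀ l l' m : Γ, ω (l + l') m = ω l m * ω l' m) →
      (∀ l m m' : Γ, ω l (m + m') = ω l m * ω l m') →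
      (∀ l : Γ, ω l l = 1) →
      ∃ ε : Γ → Γ → A, IsMulCocycle2 ε ∧
        (∀ l m : Γ, ε l m * (ε m l)⁻¹ = ω l m) ∧
        (∀ l : Γ, ε l 0 = 1 ∧ ε 0 l = 1 ∧ ε l (-l) = 1)) := by
  have : IsAddTorsionFree Γ := .of_isTorsionFree ℤ Γ
  refine ⟨fun ε ε' hε hε' => ⟨?_, fun hω => ?_⟩, fun ω h1 h2 h3 => ?_⟩
  · rintro ⟨a, ha⟩
    obtain rfl : ε' = mulCoboundary ε a := funext₂ ha
    exact fun l m => congrFun₂ (commutatorMap_mulCoboundary ε a).symm l m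
  · obtain ⟨a, ha⟩ := (hε'.div hε).exists_eq_coboundary_of_symm
      (div_apply_comm_of_commutatorMap_eq hω)
    exact ⟨a, fun l m => by simpa only [Pi.div_apply, div_eq_iff_eq_mul', mul_assoc] using ha l m⟩
  · obtain ⟨ε, h1ε, h2ε, hω⟩ := exists_biadditive_commutatorMap_eq ω h1 h2 h3
    obtain ⟨a, ha⟩ := exists_normalized_mulCoboundary_of_biadditive h1ε h2ε
    exact ⟨mulCoboundary ε a, (IsMulCocycle2.of_biadditive h1ε h2ε).mulCoboundary a,
      congrFun₂ ((commutatorMap_mulCoboundary ε a).trans hω), ha⟩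

/-- On a free abelian group of finite rank: (i) two 2-cocycles are cohomologous iff they have
the same commutator map; (ii) every alternating biadditive form is the commutator map of a
2-cocycle, which may be chosen normalized. -/
theorem cocycles_on_free_abelian (Γ : Type*) [AddCommGroup Γ]
    [Module.Free ℤ Γ] [Module.Finite ℤ Γ]
    (A : Type*) [CommGroup A] :
    (∀ ε ε' : Γ → Γ → A, IsMulCocycle2 ε → IsMulCocycle2 ε' →
      ((∃ a : Γ → A, ∀ l m : Γ, ε' l m = ε l m * a l * a m * (a (l + m))⁻¹) ↔
        (∀ l m : Γ, ε l m * (ε m l)⁻¹ = ε' l m * (ε' m l)⁻¹))) ∧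
    (∀ ω : Γ → Γ → A,
      (∀ l l' m : Γ, ω (l + l') m = ω l m * ω l' m) →
      (∀ l m m' : Γ, ω l (m + m') = ω l m * ω l m') →
      (∀ l : Γ, ω l l = 1) →
      ∃ ε : Γ → Γ → A, IsMulCocycle2 ε ∧
        (∀ l m : Γ, ε l m * (ε m l)⁻¹ = ω l m) ∧
        (∀ l : Γ, ε l 0 = 1 ∧ ε 0 l = 1 ∧ ε l (-l) = 1)) :=
  cocycles_on_free_abelian_general Γ A
end

section
/- For every function g : ℤ → [0, ∞] (extended nonnegative reals), the sum of g(k − l) over all pairs (k, l) ∈ ℤ × ℤ with k ≤ 0 < l or l ≤ 0 < k equals Σ_{m∈ℤ} |m|·g(m). -/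
/-!
Substituting `m = k - l` turns the double sum into `Σ_m g(m) · N(m)`, where `N(m)` counts the
`l` for which `l` and `m + l` lie on opposite sides of the cut between `0` and `1`. These `l`
form the half-open interval between `-m` and `0`, which has exactly `|m|` elements.
-/

open scoped ENNReal

open Finset

theorem ENNReal.tsum_prod_eq_tsum_tsum_add {G : Type*} [AddGroup G] (f : G × G → ℝ≥0∞) :
    ∑' p, f p = ∑' m, ∑' l, f (m + l, l) := by
  let shear : G × G ≃ G × G :=
    ⟨fun p => (p.1 + p.2, p.2), fun p => (p.1 - p.2, p.2), fun p => by simp, fun p => by simp⟩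
  rw [← shear.tsum_eq]
  exact ENNReal.tsum_prod'

theorem tsum_ite_mem_const {α M : Type*} [DecidableEq α] [AddCommMonoid M] [TopologicalSpace M]
    (s : Finset α) (c : M) : ∑' a, (if a ∈ s then c else 0) = #s • c := by
  rw [tsum_eq_sum fun a ha => if_neg ha, sum_ite_mem, inter_self, sum_const]

theorem Int.crossing_iff_mem_Ioc (m l : ℤ) :
    ((m + l ≤ 0 ∧ 0 < l) ∨ (l ≤ 0 ∧ 0 < m + l)) ↔ l ∈ Ioc (min 0 (-m)) (max 0 (-m)) := by
  rw [mem_Ioc]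
  omega

theorem Int.card_Ioc_min_max_neg (m : ℤ) : #(Ioc (min 0 (-m)) (max 0 (-m))) = m.natAbs := by
  rw [Int.card_Ioc]
  omega

/-- The sum of `g(k − l)` over the pairs `(k, l)` with `k ≤ 0 < l` or `l ≤ 0 < k` equals
`Σ_m |m|·g(m)` (Hilbert–Schmidt norm of the commutator with the Hardy complex structure). -/
theorem sum_commutator_hardy (g : ℤ → ℝ≥0∞) :
    ∑' p : ℤ × ℤ,
        (if (p.1 ≤ 0 ∧ 0 < p.2) ∨ (p.2 ≤ 0 ∧ 0 < p.1) then g (p.1 - p.2) else 0) =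
      ∑' m : ℤ, (m.natAbs : ℝ≥0∞) * g m := by
  rw [ENNReal.tsum_prod_eq_tsum_tsum_add]
  refine tsum_congr fun m => ?_
  simp only [add_sub_cancel_right, Int.crossing_iff_mem_Ioc]
  rw [tsum_ite_mem_const, Int.card_Ioc_min_max_neg, nsmul_eq_mul]
end
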